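/- arXiv:2106.12391 — 7 statements merged into one kernel-verified Lean document; each statement's English description precedes it below -/
import Mathlib

section
/- Let α > 0, δ ∈ (0, α), and let g : (0,∞) → ℝ have g' ≤ 0 satisfying −g'(s + t) ≤ −g'(s) e^{(α−δ)t} for all s > 0, t ≥ 0. Let E be a real Hilbert space and η : (0,∞) → E locally absolutely continuous with η(s) → 0 as s → 0⁺ and ∫₀^∞ −g'(y) ‖η'(y)‖² dy < ∞. Then for every ν > 0, −g'(ν) ‖η(ν)‖² ≤ ν e^{(α−δ)ν} ∫₀^ν −g'(y) ‖η'(y)‖² dy; consequently lim_{ν→0⁺} g'(ν) ‖η(ν)‖² = 0. -/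
/-!
Write `w = -g'`. The growth condition gives `w ν ≤ w y e^{(α-δ)ν}` for `0 < y ≤ ν`, so
`w ν ‖η ν‖² ≤ w ν ν ∫₀^ν ‖η'‖² ≤ ν e^{(α-δ)ν} ∫₀^ν w ‖η'‖²` by Cauchy–Schwarz.
The right-hand side is at most `ν e^{(α-δ)ν} ∫₀^∞ w ‖η'‖²`, which tends to `0` with `ν`.
-/

open MeasureTheory Filter Topology Set Real

lemma sq_integral_le_measureReal_mul_integral_sq {α : Type*} [MeasurableSpace α]
    {μ : Measure α} [IsFiniteMeasure μ] {f : α → ℝ} (hf : Integrable f μ)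
    (hf2 : Integrable (fun x => f x ^ 2) μ) :
    (∫ x, f x ∂μ) ^ 2 ≤ μ.real univ * ∫ x, f x ^ 2 ∂μ := by
  rcases eq_zero_or_neZero μ with rfl | _
  · simp
  have hjensen := (even_two.convexOn_pow (𝕜 := ℝ)).map_average_le
    (continuous_pow 2).continuousOn isClosed_univ (ae_of_all _ fun _ => mem_univ _) hf hf2
  simp only [average_eq, smul_eq_mul] at hjensen
  have hm := (measureReal_univ_pos (μ := μ)).ne'
  calc (∫ x, f x ∂μ) ^ 2 = μ.real univ ^ 2 * ((μ.real univ)⁻¹ * ∫ x, f x ∂μ) ^ 2 := by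
        field_simp
    _ ≤ μ.real univ ^ 2 * ((μ.real univ)⁻¹ * ∫ x, f x ^ 2 ∂μ) := by gcongr
    _ = μ.real univ * ∫ x, f x ^ 2 ∂μ := by field_simp

lemma norm_intervalIntegral_sq_le {E : Type*} [NormedAddCommGroup E] [NormedSpace ℝ E]
    {f : ℝ → E} {ν : ℝ} (hν : 0 ≤ ν) (hf : IntervalIntegrable f volume 0 ν)
    (hf2 : IntegrableOn (fun y => ‖f y‖ ^ 2) (Ioo 0 ν)) :
    ‖∫ y in (0 : ℝ)..ν, f y‖ ^ 2 ≤ ν * ∫ y in Ioo (0 : ℝ) ν, ‖f y‖ ^ 2 := by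
  have hnorm : ‖∫ y in (0 : ℝ)..ν, f y‖ ≤ ∫ y in Ioo (0 : ℝ) ν, ‖f y‖ := by
    refine intervalIntegral.norm_integral_le_integral_norm_uIoc.trans_eq ?_
    rw [uIoc_of_le hν, integral_Ioc_eq_integral_Ioo]
  have hcs := sq_integral_le_measureReal_mul_integral_sq
    ((hf.1.mono_set Ioo_subset_Ioc_self).norm) hf2
  rw [Measure.real_def, Measure.restrict_apply_univ, ← Measure.real_def,
    volume_real_Ioo_of_le hν, sub_zero] at hcs
  exact (pow_le_pow_left₀ (norm_nonneg _) hnorm 2).trans hcs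

section Weight

variable {w : ℝ → ℝ} {c : ℝ}

lemma le_mul_exp_of_growth (hc : 0 ≤ c)
    (hw : ∀ s ∈ Ioi (0 : ℝ), ∀ t : ℝ, 0 ≤ t → w (s + t) ≤ w s * exp (c * t))
    (hw0 : ∀ s ∈ Ioi (0 : ℝ), 0 ≤ w s) {y ν : ℝ} (hy : 0 < y) (hyν : y ≤ ν) :
    w ν ≤ w y * exp (c * ν) := by
  have h := hw y hy (ν - y) (sub_nonneg.2 hyν)
  rw [add_sub_cancel] at h
  exact h.trans (mul_le_mul_of_nonneg_left (exp_le_exp.2 (by nlinarith)) (hw0 y hy))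

variable {E : Type*} [NormedAddCommGroup E] [NormedSpace ℝ E]

lemma weight_mul_sq_norm_intervalIntegral_le (hc : 0 ≤ c)
    (hw : ∀ s ∈ Ioi (0 : ℝ), ∀ t : ℝ, 0 ≤ t → w (s + t) ≤ w s * exp (c * t))
    (hw0 : ∀ s ∈ Ioi (0 : ℝ), 0 ≤ w s) {f : ℝ → E} {ν : ℝ} (hν : 0 < ν)
    (hf : IntervalIntegrable f volume 0 ν)
    (hwf : IntegrableOn (fun y => w y * ‖f y‖ ^ 2) (Ioo 0 ν)) :
    w ν * ‖∫ y in (0 : ℝ)..ν, f y‖ ^ 2 ≤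
      ν * exp (c * ν) * ∫ y in Ioo (0 : ℝ) ν, w y * ‖f y‖ ^ 2 := by
  have hwf0 : 0 ≤ ∫ y in Ioo (0 : ℝ) ν, w y * ‖f y‖ ^ 2 :=
    setIntegral_nonneg measurableSet_Ioo fun y hy => mul_nonneg (hw0 y hy.1) (by positivity)
  rcases (hw0 ν hν).eq_or_lt with hwν | hwν
  · rw [← hwν, zero_mul]
    positivity
  have hpt : ∀ y ∈ Ioo (0 : ℝ) ν, w ν * ‖f y‖ ^ 2 ≤ exp (c * ν) * (w y * ‖f y‖ ^ 2) :=
    fun y hy => by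
      nlinarith [le_mul_exp_of_growth hc hw hw0 hy.1 hy.2.le, sq_nonneg ‖f y‖]
  have hf2 : IntegrableOn (fun y => ‖f y‖ ^ 2) (Ioo 0 ν) := by
    refine (hwf.const_mul (exp (c * ν) / w ν)).mono'
      ((hf.1.mono_set Ioo_subset_Ioc_self).aestronglyMeasurable.norm.pow 2) ?_
    refine (ae_restrict_iff' measurableSet_Ioo).2 (ae_of_all _ fun y hy => ?_)
    rw [norm_of_nonneg (by positivity), div_mul_eq_mul_div, le_div_iff₀ hwν, ← mul_assoc]
    linarith [hpt y hy]
  calc w ν * ‖∫ y in (0 : ℝ)..ν, f y‖ ^ 2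
      ≤ w ν * (ν * ∫ y in Ioo (0 : ℝ) ν, ‖f y‖ ^ 2) :=
        mul_le_mul_of_nonneg_left (norm_intervalIntegral_sq_le hν.le hf hf2) hwν.le
    _ = ν * ∫ y in Ioo (0 : ℝ) ν, w ν * ‖f y‖ ^ 2 := by rw [integral_const_mul]; ring
    _ ≤ ν * ∫ y in Ioo (0 : ℝ) ν, exp (c * ν) * (w y * ‖f y‖ ^ 2) :=
        mul_le_mul_of_nonneg_left (setIntegral_mono_on (hf2.const_mul _)
          (hwf.const_mul _) measurableSet_Ioo hpt) hν.le
    _ = ν * exp (c * ν) * ∫ y in Ioo (0 : ℝ) ν, w y * ‖f y‖ ^ 2 := by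
        rw [integral_const_mul]; ring

end Weight

theorem mgt_boundary_term_at_zero_general
    {E : Type*} [NormedAddCommGroup E] [InnerProductSpace ℝ E]
    (α δ : ℝ) (hδα : δ < α)
    (g' : ℝ → ℝ)
    (hg'_nonpos : ∀ s ∈ Set.Ioi (0 : ℝ), g' s ≤ 0)
    (hexp : ∀ s ∈ Set.Ioi (0 : ℝ), ∀ t : ℝ, 0 ≤ t →
      -g' (s + t) ≤ -g' s * Real.exp ((α - δ) * t))
    (η η' : ℝ → E)
    (hη'loc : ∀ ν : ℝ, 0 < ν → IntervalIntegrable η' MeasureTheory.volume 0 ν)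
    (hrepr : ∀ ν : ℝ, 0 < ν → η ν = ∫ y in (0 : ℝ)..ν, η' y)
    (hη'_int : IntegrableOn (fun y => -g' y * ‖η' y‖ ^ 2) (Set.Ioi 0)) :
    (∀ ν : ℝ, 0 < ν →
      -g' ν * ‖η ν‖ ^ 2 ≤
        ν * Real.exp ((α - δ) * ν) * ∫ y in Set.Ioo (0 : ℝ) ν, -g' y * ‖η' y‖ ^ 2) ∧
    Tendsto (fun ν => g' ν * ‖η ν‖ ^ 2) (nhdsWithin 0 (Set.Ioi 0)) (nhds 0) := by
  have hw0 : ∀ s ∈ Ioi (0 : ℝ), 0 ≤ -g' s := fun s hs => neg_nonneg.2 (hg'_nonpos s hs)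
  have hbound : ∀ ν : ℝ, 0 < ν → -g' ν * ‖η ν‖ ^ 2 ≤
      ν * exp ((α - δ) * ν) * ∫ y in Ioo (0 : ℝ) ν, -g' y * ‖η' y‖ ^ 2 := fun ν hν => by
    rw [hrepr ν hν]
    exact weight_mul_sq_norm_intervalIntegral_le (w := fun s => -g' s) (sub_nonneg.2 hδα.le)
      hexp hw0 hν (hη'loc ν hν) (hη'_int.mono_set fun y hy => hy.1)
  refine ⟨hbound, ?_⟩
  set C := ∫ y in Ioi (0 : ℝ), -g' y * ‖η' y‖ ^ 2
  have hle : ∀ ν ∈ Ioi (0 : ℝ), -g' ν * ‖η ν‖ ^ 2 ≤ ν * exp ((α - δ) * ν) * C :=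
    fun ν hν => (hbound ν hν).trans (mul_le_mul_of_nonneg_left
      (setIntegral_mono_set hη'_int
        ((ae_restrict_iff' measurableSet_Ioi).2 (ae_of_all _ fun y hy =>
          mul_nonneg (hw0 y hy) (by positivity)))
        Ioo_subset_Ioi_self.eventuallyLE)
      (mul_nonneg (le_of_lt hν) (exp_pos _).le))
  have hlim : Tendsto (fun ν : ℝ => ν * exp ((α - δ) * ν) * C) (𝓝[>] 0) (𝓝 0) := by
    simpa using ((by fun_prop : Continuous fun ν : ℝ => ν * exp ((α - δ) * ν) * C).tendsto 0
      ).mono_left nhdsWithin_le_nhds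
  have hneg := squeeze_zero' (eventually_nhdsWithin_of_forall fun ν hν =>
    mul_nonneg (hw0 ν hν) (by positivity)) (eventually_nhdsWithin_of_forall hle) hlim
  simpa using hneg.neg

/-- the boundary term at zero in the integration by parts:
`-g'(ν) ‖η(ν)‖² ≤ ν e^{(α-δ)ν} ∫₀^ν -g'(y) ‖η'(y)‖² dy`, hence
`g'(ν) ‖η(ν)‖² → 0` as `ν → 0⁺`. -/
theorem mgt_boundary_term_at_zero
    {E : Type*} [NormedAddCommGroup E] [InnerProductSpace ℝ E] [CompleteSpace E]
    (α δ : ℝ) (hδ : 0 < δ) (hδα : δ < α)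
    (g' : ℝ → ℝ)
    (hg'_nonpos : ∀ s ∈ Set.Ioi (0 : ℝ), g' s ≤ 0)
    (hexp : ∀ s ∈ Set.Ioi (0 : ℝ), ∀ t : ℝ, 0 ≤ t →
      -g' (s + t) ≤ -g' s * Real.exp ((α - δ) * t))
    (η η' : ℝ → E)
    (hη'loc : ∀ ν : ℝ, 0 < ν → IntervalIntegrable η' MeasureTheory.volume 0 ν)
    (hrepr : ∀ ν : ℝ, 0 < ν → η ν = ∫ y in (0 : ℝ)..ν, η' y)
    (hη'_int : IntegrableOn (fun y => -g' y * ‖η' y‖ ^ 2) (Set.Ioi 0)) :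
    (∀ ν : ℝ, 0 < ν →
      -g' ν * ‖η ν‖ ^ 2 ≤
        ν * Real.exp ((α - δ) * ν) * ∫ y in Set.Ioo (0 : ℝ) ν, -g' y * ‖η' y‖ ^ 2) ∧
    Tendsto (fun ν => g' ν * ‖η ν‖ ^ 2) (nhdsWithin 0 (Set.Ioi 0)) (nhds 0) :=
  mgt_boundary_term_at_zero_general α δ hδα g' hg'_nonpos hexp η η' hη'loc hrepr hη'_int
end

section
/- Let α > 0, δ ∈ (0, α), let g : (0,∞) → ℝ satisfy: g and g' are absolutely continuous and summable on (0,∞); g ≥ 0 and g' ≤ 0 on (0,∞); and (α − δ) g'(s) − g''(s) ≤ 0 for a.e. s > 0. Let E be a real Hilbert space and let η : (0,∞) → E be locally absolutely continuous with η(s) → 0 as s → 0⁺, ∫₀^∞ −g'(s) ‖η(s)‖² ds < ∞ and ∫₀^∞ −g'(s) ‖η'(s)‖² ds < ∞. Then lim_{N→∞} g'(N) ‖η(N)‖² = 0. -/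
/-!
Put `w = -g' ≥ 0` and `c = α - δ ≥ 0`. The hypothesis on `g''` is the linear differential
inequality `c g' ≤ g''`, so Grönwall's inequality gives `w N ≤ e^c w t` for `N - 1 < t ≤ N`.
On this unit window `‖η N‖² ≤ 2 ‖η t‖² + 2 (∫ ‖η'‖)²`, and Jensen bounds the last square by
`∫ ‖η'‖²`. Multiplying by `w N` and averaging over `t` gives
`w N ‖η N‖² ≤ 2 e^c ∫_{N-1}^N w (‖η‖² + ‖η'‖²)`, which tends to `0` because both weighted
integrals over `(0, ∞)` converge.
-/

open MeasureTheory Filter Topology Set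

theorem continuousOn_Icc_of_sub_eq_integral {E : Type*} [NormedAddCommGroup E] [NormedSpace ℝ E]
    {f f' : ℝ → E} {a b : ℝ} (hf' : IntervalIntegrable f' volume a b)
    (hf : ∀ t ∈ Icc a b, f t - f a = ∫ x in a..t, f' x) :
    ContinuousOn f (Icc a b) :=
  (continuousOn_const.add (intervalIntegral.continuousOn_primitive_interval' hf' left_mem_uIcc)
    |>.mono Icc_subset_uIcc).congr fun t ht => sub_eq_iff_eq_add'.mp (hf t ht)

theorem le_mul_exp_of_le_add_mul_integral {u : ℝ → ℝ} {a b c : ℝ} (hc : 0 ≤ c) (hab : a ≤ b)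
    (hu : ContinuousOn u (Icc a b)) (h : ∀ t ∈ Icc a b, u t ≤ u a + c * ∫ x in a..t, u x) :
    u b ≤ u a * Real.exp (c * (b - a)) := by
  set φ : ℝ → ℝ := fun t => u a + c * ∫ x in a..t, u x
  have hφ : ContinuousOn φ (Icc a b) := by
    have := intervalIntegral.continuousOn_primitive_interval
      (by rw [uIcc_of_le hab]; exact hu.integrableOn_Icc : IntegrableOn u (uIcc a b))
    rw [uIcc_of_le hab] at this
    exact continuousOn_const.add (continuousOn_const.mul this)
  have hφ' : ∀ t ∈ Ico a b, HasDerivWithinAt φ (c * u t) (Ici t) t := by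
    intro t ht
    have hIcc : Icc a b ∈ 𝓝[>] t := Icc_mem_nhdsGT_of_mem ht
    have := intervalIntegral.integral_hasDerivWithinAt_right (s := Ici t) (t := Ioi t)
      ((hu.mono (Icc_subset_Icc_right ht.2.le)).intervalIntegrable_of_Icc ht.1)
      ((hu.stronglyMeasurableAtFilter_nhdsWithin measurableSet_Icc t).filter_mono
        (nhdsWithin_le_of_mem hIcc))
      ((hu t (Ico_subset_Icc_self ht)).mono_of_mem_nhdsWithin hIcc)
    exact (this.const_mul c).const_add _
  have hgron := le_gronwallBound_of_liminf_deriv_right_le (δ := u a) (K := c) (ε := 0) hφ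
    (fun t ht _ hr => (hφ' t ht).liminf_right_slope_le hr) (by simp [φ])
    (fun t ht => by
      rw [add_zero]; exact mul_le_mul_of_nonneg_left (h t (Ico_subset_Icc_self ht)) hc)
    b (right_mem_Icc.2 hab)
  rw [gronwallBound_ε0] at hgron
  exact (h b (right_mem_Icc.2 hab)).trans hgron

theorem mul_exp_le_of_mul_le_deriv {f f' : ℝ → ℝ} {a b c : ℝ} (hc : 0 ≤ c) (hab : a ≤ b)
    (hf' : IntervalIntegrable f' volume a b) (hf : ∀ t ∈ Icc a b, f t - f a = ∫ x in a..t, f' x)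
    (hle : ∀ᵐ t, t ∈ Icc a b → c * f t ≤ f' t) :
    f a * Real.exp (c * (b - a)) ≤ f b := by
  have hcont := continuousOn_Icc_of_sub_eq_integral hf' hf
  have hintegral : ∀ t ∈ Icc a b, c * ∫ x in a..t, f x ≤ f t - f a := by
    intro t ht
    have hsub : Icc a t ⊆ Icc a b := Icc_subset_Icc_right ht.2
    rw [hf t ht, ← intervalIntegral.integral_const_mul]
    refine intervalIntegral.integral_mono_ae_restrict ht.1
      ((continuousOn_const.mul (hcont.mono hsub)).intervalIntegrable_of_Icc ht.1)
      (hf'.mono_set (by rwa [uIcc_of_le ht.1, uIcc_of_le hab])) ?_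
    filter_upwards [(ae_restrict_iff' measurableSet_Icc).2 (ae_of_all _ fun _ h => h),
      ae_restrict_of_ae hle] with x hx hxle using hxle (hsub hx)
  have := le_mul_exp_of_le_add_mul_integral (u := fun t => -f t) hc hab hcont.neg fun t ht => by
    simp only [intervalIntegral.integral_neg]
    linarith [hintegral t ht]
  linarith

theorem tendsto_setIntegral_Ioc_zero {E : Type*} [NormedAddCommGroup E] [NormedSpace ℝ E]
    {ι : Type*} {l : Filter ι} [l.IsCountablyGenerated] {μ : Measure ℝ} {f : ℝ → E} {a : ℝ}
    {u v : ι → ℝ}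
    (hf : IntegrableOn f (Ioi a) μ) (hu : Tendsto u l atTop) :
    Tendsto (fun i => ∫ x in Ioc (u i) (v i), f x ∂μ) l (𝓝 0) := by
  refine squeeze_zero_norm' ?_ (tendsto_integral_Ioi_zero (μ := μ) (f := fun x => ‖f x‖) hu)
  filter_upwards [hu.eventually_ge_atTop a] with i hi
  calc ‖∫ x in Ioc (u i) (v i), f x ∂μ‖ ≤ ∫ x in Ioc (u i) (v i), ‖f x‖ ∂μ :=
        norm_integral_le_integral_norm _
    _ ≤ ∫ x in Ioi (u i), ‖f x‖ ∂μ :=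
      setIntegral_mono_set ((hf.mono_set (Ioi_subset_Ioi hi)).norm)
        (Eventually.of_forall fun _ => norm_nonneg _) Ioc_subset_Ioi_self.eventuallyLE

theorem norm_intervalIntegral_le_setIntegral_norm {E : Type*} [NormedAddCommGroup E]
    [NormedSpace ℝ E] {f : ℝ → E} {a s b : ℝ} (has : a ≤ s) (hsb : s ≤ b)
    (hf : IntegrableOn f (Ioc a b)) :
    ‖∫ t in s..b, f t‖ ≤ ∫ t in Ioc a b, ‖f t‖ :=
  calc ‖∫ t in s..b, f t‖ ≤ ∫ t in Ioc s b, ‖f t‖ := by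
        rw [intervalIntegral.integral_of_le hsb]; exact norm_integral_le_integral_norm _
    _ ≤ ∫ t in Ioc a b, ‖f t‖ :=
        setIntegral_mono_set hf.norm (Eventually.of_forall fun _ => norm_nonneg _)
          (Ioc_subset_Ioc_left has).eventuallyLE

theorem sq_setIntegral_le_setIntegral_sq {α : Type*} [MeasurableSpace α] {μ : Measure α}
    {s : Set α} {f : α → ℝ} (hs : μ s = 1) (hf : IntegrableOn f s μ)
    (hf2 : IntegrableOn (fun x => f x ^ 2) s μ) :
    (∫ x in s, f x ∂μ) ^ 2 ≤ ∫ x in s, f x ^ 2 ∂μ := by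
  have := (even_two.convexOn_pow (𝕜 := ℝ)).map_set_average_le (continuous_pow 2).continuousOn
    isClosed_univ (by simp [hs]) (by simp [hs]) (Eventually.of_forall fun _ => mem_univ _) hf hf2
  simpa [setAverage_eq, measureReal_def, hs] using this

theorem mul_norm_sq_le_of_unit_window {E : Type*} [NormedAddCommGroup E] [NormedSpace ℝ E]
    {F F' : ℝ → E} {w : ℝ → ℝ} {K N : ℝ} (hwN : 0 ≤ w N)
    (hw : ∀ t ∈ Ioc (N - 1) N, w N ≤ K * w t)
    (hF : ∀ s ∈ Ioc (N - 1) N, F N - F s = ∫ t in s..N, F' t)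
    (hF' : IntegrableOn F' (Ioc (N - 1) N))
    (hwF : IntegrableOn (fun t => w t * ‖F t‖ ^ 2) (Ioc (N - 1) N))
    (hwF' : IntegrableOn (fun t => w t * ‖F' t‖ ^ 2) (Ioc (N - 1) N)) :
    w N * ‖F N‖ ^ 2 ≤ 2 * K * ((∫ t in Ioc (N - 1) N, w t * ‖F t‖ ^ 2) +
      ∫ t in Ioc (N - 1) N, w t * ‖F' t‖ ^ 2) := by
  set W := Ioc (N - 1) N
  set A := ∫ t in W, w t * ‖F t‖ ^ 2
  set B := ∫ t in W, w t * ‖F' t‖ ^ 2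
  have hW : volume W = 1 := by simp [W]
  have hWconst : ∀ r : ℝ, ∫ _ in W, r = r := fun r => by simp [measureReal_def, hW]
  have hwF'N : IntegrableOn (fun t => w N * ‖F' t‖ ^ 2) W :=
    (hwF'.const_mul K).mono' ((hF'.norm.aestronglyMeasurable.pow 2).const_mul _) <|
      (ae_restrict_iff' measurableSet_Ioc).2 <| ae_of_all _ fun t ht => by
        rw [Real.norm_of_nonneg (by positivity), ← mul_assoc]
        exact mul_le_mul_of_nonneg_right (hw t ht) (sq_nonneg _)
  -- Jensen is applied to `√(w N) ‖F'‖` rather than `‖F'‖`, whose square need not be integrable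
  -- where `w` vanishes.
  have hjump_sq : w N * (∫ t in W, ‖F' t‖) ^ 2 ≤ K * B := by
    have hsq : (fun t => (√(w N) * ‖F' t‖) ^ 2) = fun t => w N * ‖F' t‖ ^ 2 := by
      funext t; rw [mul_pow, Real.sq_sqrt hwN]
    calc w N * (∫ t in W, ‖F' t‖) ^ 2 = (∫ t in W, √(w N) * ‖F' t‖) ^ 2 := by
          rw [integral_const_mul, mul_pow, Real.sq_sqrt hwN]
      _ ≤ ∫ t in W, w N * ‖F' t‖ ^ 2 := by
          rw [← hsq]
          exact sq_setIntegral_le_setIntegral_sq hW (hF'.norm.const_mul _) (hsq ▸ hwF'N)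
      _ ≤ ∫ t in W, K * (w t * ‖F' t‖ ^ 2) :=
          setIntegral_mono_on hwF'N (hwF'.const_mul K) measurableSet_Ioc fun t ht => by
            rw [← mul_assoc]; exact mul_le_mul_of_nonneg_right (hw t ht) (sq_nonneg _)
      _ = K * B := integral_const_mul _ _
  have hpoint : ∀ s ∈ W, w N * ‖F N‖ ^ 2 ≤ 2 * K * (w s * ‖F s‖ ^ 2) + 2 * K * B := by
    intro s hs
    have hdiff : ‖F N - F s‖ ≤ ∫ t in W, ‖F' t‖ := by
      rw [hF s hs]; exact norm_intervalIntegral_le_setIntegral_norm hs.1.le hs.2 hF'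
    have hsplit : ‖F N‖ ^ 2 ≤ 2 * (‖F s‖ ^ 2 + (∫ t in W, ‖F' t‖) ^ 2) :=
      calc ‖F N‖ ^ 2 ≤ (‖F s‖ + ∫ t in W, ‖F' t‖) ^ 2 := by
            gcongr; exact (norm_le_norm_add_norm_sub' _ _).trans (by gcongr)
        _ ≤ _ := add_sq_le
    have hs' : w N * ‖F s‖ ^ 2 ≤ K * (w s * ‖F s‖ ^ 2) := by
      rw [← mul_assoc]; exact mul_le_mul_of_nonneg_right (hw s hs) (sq_nonneg _)
    nlinarith [mul_le_mul_of_nonneg_left hsplit hwN]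
  have hconst : ∀ r : ℝ, IntegrableOn (fun _ => r) W := fun r => integrableOn_const (by simp [hW])
  have hrhs : IntegrableOn (fun s => 2 * K * (w s * ‖F s‖ ^ 2) + 2 * K * B) W :=
    (hwF.const_mul (2 * K)).add (hconst _)
  calc w N * ‖F N‖ ^ 2 = ∫ _ in W, w N * ‖F N‖ ^ 2 := (hWconst _).symm
    _ ≤ ∫ s in W, (2 * K * (w s * ‖F s‖ ^ 2) + 2 * K * B) :=
        setIntegral_mono_on (hconst _) hrhs measurableSet_Ioc hpoint
    _ = 2 * K * (A + B) := by
        rw [integral_add (hwF.const_mul _) (hconst _),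
          integral_const_mul, hWconst]
        ring

theorem mgt_boundary_term_at_infinity_general
    {E : Type*} [NormedAddCommGroup E] [InnerProductSpace ℝ E]
    (α δ : ℝ) (hδα : δ < α)
    (g' g'' : ℝ → ℝ)
    (hg''loc : ∀ a b : ℝ, 0 < a → a ≤ b → IntervalIntegrable g'' MeasureTheory.volume a b)
    (hFTCg' : ∀ a b : ℝ, 0 < a → a ≤ b → g' b - g' a = ∫ y in a..b, g'' y)
    (hg'_nonpos : ∀ s ∈ Set.Ioi (0 : ℝ), g' s ≤ 0)
    (hg3 : ∀ᵐ s : ℝ, s ∈ Set.Ioi (0 : ℝ) → (α - δ) * g' s - g'' s ≤ 0)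
    (η η' : ℝ → E)
    (hη'loc : ∀ a b : ℝ, 0 < a → a ≤ b → IntervalIntegrable η' MeasureTheory.volume a b)
    (hηFTC : ∀ a b : ℝ, 0 < a → a ≤ b → η b - η a = ∫ y in a..b, η' y)
    (hη_int : IntegrableOn (fun s => -g' s * ‖η s‖ ^ 2) (Set.Ioi 0))
    (hη'_int : IntegrableOn (fun s => -g' s * ‖η' s‖ ^ 2) (Set.Ioi 0)) :
    Tendsto (fun N => g' N * ‖η N‖ ^ 2) atTop (nhds 0) := by
  set c := α - δ
  have hc : 0 ≤ c := sub_nonneg.2 hδα.le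
  have hcomp : ∀ N > 1, ∀ t ∈ Ioc (N - 1) N, -g' N ≤ Real.exp c * -g' t := by
    intro N hN t ht
    have ht0 : 0 < t := by linarith [ht.1]
    have hgrowth := mul_exp_le_of_mul_le_deriv hc ht.2 (hg''loc t N ht0 ht.2)
      (fun s hs => hFTCg' t s ht0 hs.1)
      (by filter_upwards [hg3] with s hs hst using by linarith [hs (ht0.trans_le hst.1)])
    have hexp : Real.exp (c * (N - t)) ≤ Real.exp c :=
      Real.exp_le_exp.2 (by nlinarith [ht.1])
    nlinarith [hg'_nonpos t ht0]
  have hbound : ∀ N > 1, -g' N * ‖η N‖ ^ 2 ≤ 2 * Real.exp c *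
      ((∫ t in Ioc (N - 1) N, -g' t * ‖η t‖ ^ 2) + ∫ t in Ioc (N - 1) N, -g' t * ‖η' t‖ ^ 2) := by
    intro N hN
    have hW : Ioc (N - 1) N ⊆ Ioi 0 := fun t ht => show 0 < t by linarith [ht.1]
    exact mul_norm_sq_le_of_unit_window (w := fun t => -g' t)
      (neg_nonneg.2 (hg'_nonpos N (zero_lt_one.trans hN))) (hcomp N hN)
      (fun s hs => hηFTC s N (hW hs) hs.2) (hη'loc (N - 1) N (by linarith) (by linarith)).1
      (hη_int.mono_set hW) (hη'_int.mono_set hW)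
  have hwindow : Tendsto (fun N : ℝ => N - 1) atTop atTop := by
    simpa only [sub_eq_add_neg, id] using tendsto_atTop_add_const_right atTop (-1 : ℝ) tendsto_id
  have hlim := ((tendsto_setIntegral_Ioc_zero (v := id) hη_int hwindow).add
    (tendsto_setIntegral_Ioc_zero (v := id) hη'_int hwindow)).const_mul (2 * Real.exp c)
  rw [add_zero, mul_zero] at hlim
  have hnonneg : ∀ᶠ N in atTop, 0 ≤ -g' N * ‖η N‖ ^ 2 := (eventually_gt_atTop 0).mono
    fun N hN => mul_nonneg (neg_nonneg.2 (hg'_nonpos N hN)) (sq_nonneg _)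
  simpa using (squeeze_zero' hnonneg ((eventually_gt_atTop 1).mono hbound) hlim).neg

/-- the boundary term at infinity in the integration by parts vanishes:
`g'(N) ‖η(N)‖² → 0` as `N → ∞`. -/
theorem mgt_boundary_term_at_infinity
    {E : Type*} [NormedAddCommGroup E] [InnerProductSpace ℝ E] [CompleteSpace E]
    (α δ : ℝ) (hδ : 0 < δ) (hδα : δ < α)
    (g g' g'' : ℝ → ℝ)
    (hgderiv : ∀ s ∈ Set.Ioi (0 : ℝ), HasDerivAt g (g' s) s)
    (hg'deriv : ∀ᵐ s : ℝ, s ∈ Set.Ioi (0 : ℝ) → HasDerivAt g' (g'' s) s)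
    (hg''loc : ∀ a b : ℝ, 0 < a → a ≤ b → IntervalIntegrable g'' MeasureTheory.volume a b)
    (hFTCg' : ∀ a b : ℝ, 0 < a → a ≤ b → g' b - g' a = ∫ y in a..b, g'' y)
    (hg_int : IntegrableOn g (Set.Ioi 0))
    (hg'_int : IntegrableOn g' (Set.Ioi 0))
    (hg_nonneg : ∀ s ∈ Set.Ioi (0 : ℝ), 0 ≤ g s)
    (hg'_nonpos : ∀ s ∈ Set.Ioi (0 : ℝ), g' s ≤ 0)
    (hg3 : ∀ᵐ s : ℝ, s ∈ Set.Ioi (0 : ℝ) → (α - δ) * g' s - g'' s ≤ 0)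
    (η η' : ℝ → E)
    (hηderiv : ∀ᵐ s : ℝ, s ∈ Set.Ioi (0 : ℝ) → HasDerivAt η (η' s) s)
    (hη'loc : ∀ a b : ℝ, 0 < a → a ≤ b → IntervalIntegrable η' MeasureTheory.volume a b)
    (hηFTC : ∀ a b : ℝ, 0 < a → a ≤ b → η b - η a = ∫ y in a..b, η' y)
    (hη0 : Tendsto η (nhdsWithin 0 (Set.Ioi 0)) (nhds 0))
    (hη_int : IntegrableOn (fun s => -g' s * ‖η s‖ ^ 2) (Set.Ioi 0))
    (hη'_int : IntegrableOn (fun s => -g' s * ‖η' s‖ ^ 2) (Set.Ioi 0)) :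
    Tendsto (fun N => g' N * ‖η N‖ ^ 2) atTop (nhds 0) :=
  mgt_boundary_term_at_infinity_general α δ hδα g' g'' hg''loc hFTCg' hg'_nonpos hg3 η η' hη'loc
    hηFTC hη_int hη'_int
end

section
/- Let α > 0, δ ∈ (0, α), set ω = (α − δ)/2, and let g : (0,∞) → ℝ have g' ≤ 0 satisfying −g'(s + t) ≤ −g'(s) e^{(α−δ)t} for all s > 0, t ≥ 0. Let E be a real Hilbert space and ξ : (0,∞) → E strongly measurable with ∫₀^∞ −g'(s) ‖ξ(s)‖² ds < ∞. Define η(s) = ∫₀^s e^{−(1+ω)(s−y)} ξ(y) dy. Then √(−g'(s)) ‖η(s)‖ ≤ ∫₀^s e^{−(s−y)} √(−g'(y)) ‖ξ(y)‖ dy for every s > 0, and consequently ∫₀^∞ −g'(s) ‖η(s)‖² ds ≤ ∫₀^∞ −g'(s) ‖ξ(s)‖² ds. -/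
/-!
For `0 < y ≤ s` the growth bound gives `-g'(s) ≤ -g'(y) e^{2ω(s-y)}`; taking square roots,
`√(-g'(s)) e^{-(1+ω)(s-y)} ≤ e^{-(s-y)} √(-g'(y))`, which is the pointwise estimate with
`φ = √(-g') ‖ξ‖`. The integral estimate is Young's inequality for the convolution of `φ` with the
kernel `e^{-t}` on `t ≥ 0`, of total mass `1`: Cauchy–Schwarz against the kernel bounds
`(∫₀^s e^{-(s-y)} φ(y) dy)²` by `∫₀^s e^{-(s-y)} φ(y)² dy`, and Tonelli integrates the latter over
`s > 0` to `∫ φ²`. The measurability of `-g'` that this needs comes from the antitonicity of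
`e^{-(α-δ)s} (-g'(s))`.
-/

open MeasureTheory Set Real
open scoped ENNReal

theorem sqrt_mul_exp_le_exp_mul_sqrt {a b κ t : ℝ} (h : a ≤ b * exp (κ * t)) :
    √a * exp (-(1 + κ / 2) * t) ≤ exp (-t) * √b := by
  have hsqrt : √a ≤ √b * exp (κ * t / 2) := by
    rw [exp_half, ← sqrt_mul' _ (exp_pos _).le]
    exact sqrt_le_sqrt h
  calc √a * exp (-(1 + κ / 2) * t) ≤ √b * exp (κ * t / 2) * exp (-(1 + κ / 2) * t) := by
        gcongr
    _ = exp (-t) * √b := by rw [mul_assoc, ← exp_add]; ring_nf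

theorem sqrt_mul_norm_integral_exp_smul_le {E : Type*} [NormedAddCommGroup E] [NormedSpace ℝ E]
    {w : ℝ → ℝ} {κ s : ℝ} {ξ : ℝ → E} (hs : 0 ≤ s)
    (hw : ∀ y ∈ Ioc 0 s, w s ≤ w y * exp (κ * (s - y)))
    (hint : IntegrableOn (fun y => exp (-(s - y)) * (√(w y) * ‖ξ y‖)) (Ioc 0 s)) :
    √(w s) * ‖∫ y in (0 : ℝ)..s, exp (-(1 + κ / 2) * (s - y)) • ξ y‖
      ≤ ∫ y in (0 : ℝ)..s, exp (-(s - y)) * (√(w y) * ‖ξ y‖) := by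
  rw [intervalIntegral.integral_of_le hs, intervalIntegral.integral_of_le hs]
  calc √(w s) * ‖∫ y in Ioc 0 s, exp (-(1 + κ / 2) * (s - y)) • ξ y‖
      ≤ √(w s) * ∫ y in Ioc 0 s, ‖exp (-(1 + κ / 2) * (s - y)) • ξ y‖ := by
        gcongr; exact norm_integral_le_integral_norm _
    _ = ∫ y in Ioc 0 s, √(w s) * ‖exp (-(1 + κ / 2) * (s - y)) • ξ y‖ :=
        (integral_const_mul _ _).symm
    _ ≤ _ := by
        refine integral_mono_of_nonneg (ae_of_all _ fun y => by positivity) hint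
          (ae_restrict_of_forall_mem measurableSet_Ioc fun y hy => ?_)
        dsimp only
        rw [norm_smul, norm_of_nonneg (exp_pos _).le, ← mul_assoc, ← mul_assoc]
        exact mul_le_mul_of_nonneg_right (sqrt_mul_exp_le_exp_mul_sqrt (hw y hy)) (norm_nonneg _)

theorem ENNReal.sq_rpow_one_half (x : ℝ≥0∞) : (x ^ (1 / 2 : ℝ)) ^ 2 = x := by
  simpa using ENNReal.rpow_inv_natCast_pow two_ne_zero x

theorem sq_lintegral_mul_le {α : Type*} [MeasurableSpace α] {μ : Measure α} {w f : α → ℝ≥0∞}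
    (hw : AEMeasurable w μ) (hf : AEMeasurable f μ) :
    (∫⁻ a, w a * f a ∂μ) ^ 2 ≤ (∫⁻ a, w a ∂μ) * ∫⁻ a, w a * f a ^ 2 ∂μ := by
  have hHolder := ENNReal.lintegral_mul_le_Lp_mul_Lq μ Real.HolderConjugate.two_two
    (hw.pow_const (1 / 2 : ℝ)) ((hw.pow_const (1 / 2 : ℝ)).mul hf)
  simp only [Pi.mul_apply, ENNReal.rpow_two, mul_pow, ← mul_assoc, ← sq,
    ENNReal.sq_rpow_one_half] at hHolder
  calc (∫⁻ a, w a * f a ∂μ) ^ 2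
      ≤ ((∫⁻ a, w a ∂μ) ^ (1 / 2 : ℝ) * (∫⁻ a, w a * f a ^ 2 ∂μ) ^ (1 / 2 : ℝ)) ^ 2 := by
        gcongr
    _ = (∫⁻ a, w a ∂μ) * ∫⁻ a, w a * f a ^ 2 ∂μ := by
        rw [mul_pow, ENNReal.sq_rpow_one_half, ENNReal.sq_rpow_one_half]

theorem lintegral_Iic_ofReal_exp_neg_sub (s : ℝ) :
    ∫⁻ y in Iic s, ENNReal.ofReal (exp (-(s - y))) = 1 := by
  have hexp : (fun y => exp (-(s - y))) = fun y => exp (-s) * exp y := by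
    ext y; rw [← exp_add]; ring_nf
  rw [← ofReal_integral_eq_lintegral_ofReal, hexp, integral_const_mul, integral_exp_Iic,
    ← exp_add, neg_add_cancel, exp_zero, ENNReal.ofReal_one]
  · rw [hexp]; exact (integrableOn_exp_Iic s).const_mul _
  · exact Filter.Eventually.of_forall fun y => (exp_pos _).le

theorem lintegral_Ici_ofReal_exp_neg_sub (y : ℝ) :
    ∫⁻ s in Ici y, ENNReal.ofReal (exp (-(s - y))) = 1 := by
  have hexp : (fun s => exp (-(s - y))) = fun s => exp y * exp (-s) := by
    ext s; rw [← exp_add]; ring_nf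
  rw [Measure.restrict_congr_set Ioi_ae_eq_Ici.symm, ← ofReal_integral_eq_lintegral_ofReal, hexp,
    integral_const_mul, integral_exp_neg_Ioi, ← exp_add, add_neg_cancel, exp_zero,
    ENNReal.ofReal_one]
  · rw [hexp]; simpa using (exp_neg_integrableOn_Ioi y one_pos).const_mul (exp y)
  · exact Filter.Eventually.of_forall fun s => (exp_pos _).le

theorem lintegral_Ioi_lintegral_Ioc_exp_mul {W : ℝ → ℝ≥0∞}
    (hW : AEMeasurable W (volume.restrict (Ioi 0))) :
    ∫⁻ s in Ioi 0, ∫⁻ y in Ioc 0 s, ENNReal.ofReal (exp (-(s - y))) * W y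
      = ∫⁻ y in Ioi 0, W y := by
  set k : ℝ → ℝ → ℝ≥0∞ := fun s y => ENNReal.ofReal (exp (-(s - y)))
  have hk : Measurable (Function.uncurry k) := by fun_prop
  have hIoc : ∀ s, ∫⁻ y in Ioc 0 s, k s y * W y
      = ∫⁻ y in Ioi 0, (Iic s).indicator (fun y => k s y * W y) y := fun s => by
    rw [lintegral_indicator measurableSet_Iic, Measure.restrict_restrict measurableSet_Iic,
      Iic_inter_Ioi]
  have hIci : ∀ y ∈ Ioi (0 : ℝ),
      ∫⁻ s in Ioi 0, (Iic s).indicator (fun y => k s y * W y) y = W y := fun y hy => by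
    have hslice : ∀ s, (Iic s).indicator (fun y => k s y * W y) y
        = (Ici y).indicator (fun s => k s y) s * W y := fun s => by
      by_cases h : y ≤ s <;> simp [h]
    simp_rw [hslice]
    rw [lintegral_mul_const _ (hk.of_uncurry_right.indicator measurableSet_Ici),
      lintegral_indicator measurableSet_Ici, Measure.restrict_restrict measurableSet_Ici,
      inter_eq_left.2 (Ici_subset_Ioi.2 hy), lintegral_Ici_ofReal_exp_neg_sub, one_mul]
  have hmeas : AEMeasurable
      (Function.uncurry fun s y => (Iic s).indicator (fun y => k s y * W y) y)
      ((volume.restrict (Ioi 0)).prod (volume.restrict (Ioi 0))) := by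
    change AEMeasurable ({p : ℝ × ℝ | p.2 ≤ p.1}.indicator fun p => k p.1 p.2 * W p.2) _
    exact (hk.aemeasurable.mul hW.comp_snd).indicator
      (measurableSet_le measurable_snd measurable_fst)
  rw [lintegral_congr hIoc, lintegral_lintegral_swap hmeas]
  exact setLIntegral_congr_fun measurableSet_Ioi hIci

theorem sq_lintegral_Ioc_enorm_exp_mul_le {φ : ℝ → ℝ} {s : ℝ}
    (hφ : AEMeasurable φ (volume.restrict (Ioc 0 s))) :
    (∫⁻ y in Ioc 0 s, ‖exp (-(s - y)) * φ y‖ₑ) ^ 2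
      ≤ ∫⁻ y in Ioc 0 s, ENNReal.ofReal (exp (-(s - y))) * ‖φ y‖ₑ ^ 2 := by
  have hkernel : ∫⁻ y in Ioc 0 s, ENNReal.ofReal (exp (-(s - y))) ≤ 1 :=
    (lintegral_mono_set Ioc_subset_Iic_self).trans_eq (lintegral_Iic_ofReal_exp_neg_sub s)
  simp_rw [enorm_mul, Real.enorm_of_nonneg (exp_pos _).le]
  exact (sq_lintegral_mul_le (by fun_prop) hφ.enorm).trans (mul_le_of_le_one_left' hkernel)

theorem integrableOn_Ioc_exp_mul {φ : ℝ → ℝ} {s : ℝ}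
    (hφ : AEStronglyMeasurable φ (volume.restrict (Ioc 0 s)))
    (hφ2 : ∫⁻ y in Ioc 0 s, ‖φ y‖ₑ ^ 2 ≠ ∞) :
    IntegrableOn (fun y => exp (-(s - y)) * φ y) (Ioc 0 s) := by
  refine ⟨(by fun_prop : Continuous fun y => exp (-(s - y))).aestronglyMeasurable.mul hφ, ?_⟩
  have hkernel : ∀ y ∈ Ioc 0 s,
      ENNReal.ofReal (exp (-(s - y))) * ‖φ y‖ₑ ^ 2 ≤ ‖φ y‖ₑ ^ 2 := fun y hy =>
    mul_le_of_le_one_left' (ENNReal.ofReal_le_one.2 (exp_le_one_iff.2 (by linarith [hy.2])))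
  have hsq := (sq_lintegral_Ioc_enorm_exp_mul_le hφ.aemeasurable).trans
    (setLIntegral_mono' measurableSet_Ioc hkernel)
  exact (ENNReal.pow_lt_top_iff.1 (hsq.trans_lt hφ2.lt_top)).resolve_right two_ne_zero

theorem lintegral_Ioi_enorm_integral_exp_mul_sq_le {φ : ℝ → ℝ}
    (hφ : AEMeasurable φ (volume.restrict (Ioi 0))) :
    ∫⁻ s in Ioi 0, ‖∫ y in (0 : ℝ)..s, exp (-(s - y)) * φ y‖ₑ ^ 2
      ≤ ∫⁻ s in Ioi 0, ‖φ s‖ₑ ^ 2 := by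
  calc _ ≤ ∫⁻ s in Ioi 0, ∫⁻ y in Ioc 0 s, ENNReal.ofReal (exp (-(s - y))) * ‖φ y‖ₑ ^ 2 := by
        refine setLIntegral_mono' measurableSet_Ioi fun s hs => ?_
        rw [intervalIntegral.integral_of_le (le_of_lt hs)]
        exact (pow_le_pow_left' (enorm_integral_le_lintegral_enorm _) 2).trans
          (sq_lintegral_Ioc_enorm_exp_mul_le (hφ.mono_measure
            (Measure.restrict_mono Ioc_subset_Ioi_self le_rfl)))
    _ = _ := lintegral_Ioi_lintegral_Ioc_exp_mul (hφ.enorm.pow_const 2)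

theorem aemeasurable_restrict_of_le_mul_exp {f : ℝ → ℝ} {κ : ℝ} {S : Set ℝ}
    (hS : MeasurableSet S) (hf : ∀ x ∈ S, ∀ y ∈ S, x ≤ y → f y ≤ f x * exp (κ * (y - x))) :
    AEMeasurable f (volume.restrict S) := by
  have hanti : AntitoneOn (fun x => f x * exp (-(κ * x))) S := fun x hx y hy hxy =>
    calc f y * exp (-(κ * y)) ≤ f x * exp (κ * (y - x)) * exp (-(κ * y)) := by
          gcongr; exact hf x hx y hy hxy
      _ = f x * exp (-(κ * x)) := by rw [mul_assoc, ← exp_add]; ring_nf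
  refine ((aemeasurable_restrict_of_antitoneOn hS hanti).mul
    (measurable_exp.comp (measurable_const_mul κ)).aemeasurable).congr (ae_of_all _ fun x => ?_)
  simp [mul_assoc, ← exp_add]

theorem integral_le_integral_of_lintegral_enorm_le {α : Type*} [MeasurableSpace α]
    {μ : Measure α} {f g : α → ℝ} (hg : Integrable g μ) (hg0 : 0 ≤ᵐ[μ] g)
    (h : ∫⁻ a, ‖f a‖ₑ ∂μ ≤ ∫⁻ a, ‖g a‖ₑ ∂μ) :
    ∫ a, f a ∂μ ≤ ∫ a, g a ∂μ :=
  calc ∫ a, f a ∂μ ≤ ‖∫ a, f a ∂μ‖ := le_norm_self _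
    _ ≤ (∫⁻ a, ‖f a‖ₑ ∂μ).toReal := by
        simpa only [ofReal_norm] using norm_integral_le_lintegral_norm f
    _ ≤ (∫⁻ a, ‖g a‖ₑ ∂μ).toReal := ENNReal.toReal_mono hg.2.ne h
    _ = ∫ a, ‖g a‖ ∂μ := (integral_norm_eq_lintegral_enorm hg.1).symm
    _ = ∫ a, g a ∂μ := integral_congr_ae (hg0.mono fun a ha => norm_of_nonneg ha)

theorem mgt_resolvent_estimate_general
    {E : Type*} [NormedAddCommGroup E] [InnerProductSpace ℝ E]
    (α δ : ℝ)
    (g' : ℝ → ℝ)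
    (hg'_nonpos : ∀ s ∈ Set.Ioi (0 : ℝ), g' s ≤ 0)
    (hexp : ∀ s ∈ Set.Ioi (0 : ℝ), ∀ t : ℝ, 0 ≤ t →
      -g' (s + t) ≤ -g' s * Real.exp ((α - δ) * t))
    (ξ : ℝ → E)
    (hmeas : AEStronglyMeasurable ξ (MeasureTheory.volume.restrict (Set.Ioi 0)))
    (hint : IntegrableOn (fun s => -g' s * ‖ξ s‖ ^ 2) (Set.Ioi 0))
    (η : ℝ → E)
    (hη : ∀ s : ℝ, η s = ∫ y in (0 : ℝ)..s, Real.exp (-(1 + (α - δ) / 2) * (s - y)) • ξ y) :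
    (∀ s ∈ Set.Ioi (0 : ℝ),
      Real.sqrt (-g' s) * ‖η s‖
        ≤ ∫ y in (0 : ℝ)..s, Real.exp (-(s - y)) * (Real.sqrt (-g' y) * ‖ξ y‖)) ∧
    (∫ s in Set.Ioi (0 : ℝ), -g' s * ‖η s‖ ^ 2)
      ≤ ∫ s in Set.Ioi (0 : ℝ), -g' s * ‖ξ s‖ ^ 2 := by
  have hw0 : ∀ y ∈ Ioi (0 : ℝ), 0 ≤ -g' y := fun y hy => neg_nonneg.2 (hg'_nonpos y hy)
  have hgrowth : ∀ y ∈ Ioi (0 : ℝ), ∀ s ∈ Ioi (0 : ℝ), y ≤ s →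
      -g' s ≤ -g' y * exp ((α - δ) * (s - y)) := fun y hy s _ hys => by
    simpa using hexp y hy (s - y) (sub_nonneg.2 hys)
  set φ : ℝ → ℝ := fun y => √(-g' y) * ‖ξ y‖
  have hφ : AEStronglyMeasurable φ (volume.restrict (Ioi 0)) :=
    ((continuous_sqrt.measurable.comp_aemeasurable
      (aemeasurable_restrict_of_le_mul_exp measurableSet_Ioi hgrowth)).mul
      hmeas.norm.aemeasurable).aestronglyMeasurable
  have hφL2 : ∫⁻ y in Ioi 0, ‖φ y‖ₑ ^ 2 = ∫⁻ y in Ioi 0, ‖-g' y * ‖ξ y‖ ^ 2‖ₑ :=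
    setLIntegral_congr_fun measurableSet_Ioi fun y hy => by
      rw [← enorm_pow, mul_pow, sq_sqrt (hw0 y hy)]
  have hpointwise : ∀ s ∈ Ioi (0 : ℝ),
      √(-g' s) * ‖η s‖ ≤ ∫ y in (0 : ℝ)..s, exp (-(s - y)) * φ y := fun s hs => by
    rw [hη s]
    refine sqrt_mul_norm_integral_exp_smul_le (w := fun y => -g' y) hs.le
      (fun y hy => hgrowth y hy.1 s hs hy.2) (integrableOn_Ioc_exp_mul
        (hφ.mono_measure (Measure.restrict_mono Ioc_subset_Ioi_self le_rfl)) ?_)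
    exact ((lintegral_mono_set Ioc_subset_Ioi_self).trans_lt (hφL2 ▸ hint.2)).ne
  refine ⟨hpointwise, integral_le_integral_of_lintegral_enorm_le hint
    (ae_restrict_of_forall_mem measurableSet_Ioi fun s hs => mul_nonneg (hw0 s hs) (sq_nonneg _))
    ?_⟩
  calc ∫⁻ s in Ioi 0, ‖-g' s * ‖η s‖ ^ 2‖ₑ
      ≤ ∫⁻ s in Ioi 0, ‖∫ y in (0 : ℝ)..s, exp (-(s - y)) * φ y‖ₑ ^ 2 := by
        refine setLIntegral_mono' measurableSet_Ioi fun s hs => ?_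
        rw [← sq_sqrt (hw0 s hs), ← mul_pow, enorm_pow]
        gcongr
        rw [enorm_le_iff_norm_le, norm_of_nonneg (by positivity)]
        exact (hpointwise s hs).trans (le_norm_self _)
    _ ≤ ∫⁻ s in Ioi 0, ‖φ s‖ₑ ^ 2 := lintegral_Ioi_enorm_integral_exp_mul_sq_le hφ.aemeasurable
    _ = _ := hφL2

/-- the resolvent estimate for the range condition `Range(I - S) = M`:
with `ω = (α-δ)/2` and `η(s) = ∫₀^s e^{-(1+ω)(s-y)} ξ(y) dy`, one has
`√(-g'(s)) ‖η(s)‖ ≤ (E * φ)(s)` pointwise, and `‖η‖_M ≤ ‖ξ‖_M`. -/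
theorem mgt_resolvent_estimate
    {E : Type*} [NormedAddCommGroup E] [InnerProductSpace ℝ E] [CompleteSpace E]
    (α δ : ℝ) (hδ : 0 < δ) (hδα : δ < α)
    (g' : ℝ → ℝ)
    (hg'_nonpos : ∀ s ∈ Set.Ioi (0 : ℝ), g' s ≤ 0)
    (hexp : ∀ s ∈ Set.Ioi (0 : ℝ), ∀ t : ℝ, 0 ≤ t →
      -g' (s + t) ≤ -g' s * Real.exp ((α - δ) * t))
    (ξ : ℝ → E)
    (hmeas : AEStronglyMeasurable ξ (MeasureTheory.volume.restrict (Set.Ioi 0)))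
    (hint : IntegrableOn (fun s => -g' s * ‖ξ s‖ ^ 2) (Set.Ioi 0))
    (η : ℝ → E)
    (hη : ∀ s : ℝ, η s = ∫ y in (0 : ℝ)..s, Real.exp (-(1 + (α - δ) / 2) * (s - y)) • ξ y) :
    (∀ s ∈ Set.Ioi (0 : ℝ),
      Real.sqrt (-g' s) * ‖η s‖
        ≤ ∫ y in (0 : ℝ)..s, Real.exp (-(s - y)) * (Real.sqrt (-g' y) * ‖ξ y‖)) ∧
    (∫ s in Set.Ioi (0 : ℝ), -g' s * ‖η s‖ ^ 2)
      ≤ ∫ s in Set.Ioi (0 : ℝ), -g' s * ‖ξ s‖ ^ 2 :=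
  mgt_resolvent_estimate_general α δ g' hg'_nonpos hexp ξ hmeas hint η hη
end

section
/- Let α > 0, δ ∈ (0, α), set ω = (α − δ)/2, and let g : (0,∞) → ℝ have g' ≤ 0 satisfying −g'(s + t) ≤ −g'(s) e^{(α−δ)t} for all s > 0, t ≥ 0. Let E be a real Hilbert space and η : (0,∞) → E locally absolutely continuous with η(s) → 0 as s → 0⁺ and ∫₀^∞ −g'(y) ‖η'(y)‖² dy < ∞. Then for every t > 0, (1/t²) ∫₀^t −g'(s) ‖η(s)‖² ds ≤ e^{2ωt} ∫₀^t −g'(y) ‖η'(y)‖² dy; in particular (1/t²) ∫₀^t −g'(s) ‖η(s)‖² ds → 0 as t → 0⁺. -/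
/-!
Writing `w = -g'`, the growth condition gives `w s ≤ e^{(α-δ)t} w y` whenever `0 < y ≤ s ≤ t`.
Since `η s = ∫₀^s η'`, Cauchy–Schwarz gives `‖η s‖² ≤ s ∫₀^s ‖η'‖²`, and moving the weight `w s`
under the integral yields `w s ‖η s‖² ≤ t e^{(α-δ)t} ∫₀^t w ‖η'‖²` for `0 < s < t`. Integrating
over `(0, t)` produces the factor `t²`. The right-hand side tends to `0` because the integral
of the integrable function `w ‖η'‖²` over `(0, t)` does.
-/

open MeasureTheory Filter Topology Set

lemma sq_integral_le_measureReal_univ_mul_integral_sq {α : Type*} [MeasurableSpace α]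
    {μ : Measure α} [IsFiniteMeasure μ] {f : α → ℝ} (hf : MemLp f 2 μ) :
    (∫ x, f x ∂μ) ^ 2 ≤ μ.real univ * ∫ x, f x ^ 2 ∂μ := by
  rcases eq_zero_or_neZero μ with rfl | hμ
  · simp
  have hm : 0 < μ.real univ := measureReal_univ_pos
  have jensen := (even_two.convexOn_pow (𝕜 := ℝ)).map_average_le (continuous_pow 2).continuousOn
    isClosed_univ (ae_of_all _ fun _ => mem_univ _) (hf.integrable one_le_two) hf.integrable_sq
  simp only [average_eq, smul_eq_mul, mul_pow] at jensen
  have := mul_le_mul_of_nonneg_left jensen (sq_nonneg (μ.real univ))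
  field_simp at this
  linarith

lemma sq_norm_intervalIntegral_le {E : Type*} [NormedAddCommGroup E] [NormedSpace ℝ E]
    {f : ℝ → E} {a b : ℝ} (hab : a ≤ b) (hf : IntegrableOn (fun y => ‖f y‖ ^ 2) (Ioo a b)) :
    ‖∫ y in a..b, f y‖ ^ 2 ≤ (b - a) * ∫ y in Ioo a b, ‖f y‖ ^ 2 := by
  have : IsFiniteMeasure (volume.restrict (Ioo a b)) :=
    isFiniteMeasure_restrict.2 measure_Ioo_lt_top.ne
  have hmeas : AEStronglyMeasurable (fun y => ‖f y‖) (volume.restrict (Ioo a b)) := by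
    simpa [Real.sqrt_sq (norm_nonneg _)] using
      hf.aestronglyMeasurable.aemeasurable.sqrt.aestronglyMeasurable
  have hL2 : MemLp (fun y => ‖f y‖) 2 (volume.restrict (Ioo a b)) :=
    (memLp_two_iff_integrable_sq hmeas).2 hf
  calc ‖∫ y in a..b, f y‖ ^ 2 ≤ (∫ y in Ioo a b, ‖f y‖) ^ 2 := by
        gcongr
        rw [intervalIntegral.integral_of_le hab, ← integral_Ioc_eq_integral_Ioo]
        exact norm_integral_le_integral_norm _
    _ ≤ (b - a) * ∫ y in Ioo a b, ‖f y‖ ^ 2 := by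
        simpa [Real.volume_real_Ioo_of_le hab] using
          sq_integral_le_measureReal_univ_mul_integral_sq hL2

lemma tendsto_setIntegral_Ioo_nhdsGT_zero {E : Type*} [NormedAddCommGroup E] [NormedSpace ℝ E]
    {F : ℝ → E} (hF : IntegrableOn F (Ioi 0)) :
    Tendsto (fun t => ∫ y in Ioo 0 t, F y) (𝓝[>] 0) (𝓝 0) := by
  have hcont : ContinuousWithinAt (fun t => ∫ y in (0:ℝ)..t, F y) (Icc 0 1) 0 :=
    intervalIntegral.continuousWithinAt_primitive (measure_singleton 0) (by
      simpa [intervalIntegrable_iff_integrableOn_Ioc_of_le] using hF.mono_set Ioc_subset_Ioi_self)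
  have hlim := (hcont.mono_of_mem_nhdsWithin (Icc_mem_nhdsGT zero_lt_one)).tendsto
  rw [intervalIntegral.integral_same] at hlim
  refine hlim.congr' ?_
  filter_upwards [self_mem_nhdsWithin] with t ht
  rw [intervalIntegral.integral_of_le (le_of_lt ht), integral_Ioc_eq_integral_Ioo]

section Weighted

variable {E : Type*} [NormedAddCommGroup E] {w : ℝ → ℝ} {κ : ℝ}

lemma le_exp_mul_of_growth_le (hκ : 0 ≤ κ) (hw0 : ∀ s ∈ Ioi (0 : ℝ), 0 ≤ w s)
    (hw : ∀ s ∈ Ioi (0 : ℝ), ∀ t : ℝ, 0 ≤ t → w (s + t) ≤ w s * Real.exp (κ * t))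
    {y s t : ℝ} (hy : 0 < y) (hys : y ≤ s) (hst : s ≤ t) :
    w s ≤ Real.exp (κ * t) * w y :=
  calc w s = w (y + (s - y)) := by rw [add_sub_cancel]
    _ ≤ w y * Real.exp (κ * (s - y)) := hw y hy _ (sub_nonneg.2 hys)
    _ ≤ w y * Real.exp (κ * t) := by
        gcongr
        · exact hw0 y hy
        · linarith
    _ = Real.exp (κ * t) * w y := mul_comm _ _

lemma mul_setIntegral_sq_norm_le (hκ : 0 ≤ κ) (hw0 : ∀ s ∈ Ioi (0 : ℝ), 0 ≤ w s)
    (hw : ∀ s ∈ Ioi (0 : ℝ), ∀ t : ℝ, 0 ≤ t → w (s + t) ≤ w s * Real.exp (κ * t))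
    {f : ℝ → E} {s t : ℝ} (hst : s ≤ t) (hf : IntegrableOn (fun y => ‖f y‖ ^ 2) (Ioo 0 s))
    (hwf : IntegrableOn (fun y => w y * ‖f y‖ ^ 2) (Ioo 0 t)) :
    w s * ∫ y in Ioo 0 s, ‖f y‖ ^ 2 ≤ Real.exp (κ * t) * ∫ y in Ioo 0 t, w y * ‖f y‖ ^ 2 := by
  rw [← integral_const_mul, ← integral_const_mul]
  calc ∫ y in Ioo 0 s, w s * ‖f y‖ ^ 2
      ≤ ∫ y in Ioo 0 s, Real.exp (κ * t) * (w y * ‖f y‖ ^ 2) := by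
        refine setIntegral_mono_on (hf.const_mul _)
          ((hwf.mono_set (Ioo_subset_Ioo_right hst)).const_mul _) measurableSet_Ioo
          fun y hy => ?_
        rw [← mul_assoc]
        gcongr
        exact le_exp_mul_of_growth_le hκ hw0 hw hy.1 hy.2.le hst
    _ ≤ ∫ y in Ioo 0 t, Real.exp (κ * t) * (w y * ‖f y‖ ^ 2) := by
        refine setIntegral_mono_set (hwf.const_mul _) ?_ (Ioo_subset_Ioo_right hst).eventuallyLE
        filter_upwards [ae_restrict_mem measurableSet_Ioo] with y hy
        exact mul_nonneg (Real.exp_pos _).le (mul_nonneg (hw0 y hy.1) (sq_nonneg _))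

variable [NormedSpace ℝ E] {η η' : ℝ → E}

lemma mul_sq_norm_le_of_eq_intervalIntegral (hκ : 0 ≤ κ) (hw0 : ∀ s ∈ Ioi (0 : ℝ), 0 ≤ w s)
    (hw : ∀ s ∈ Ioi (0 : ℝ), ∀ t : ℝ, 0 ≤ t → w (s + t) ≤ w s * Real.exp (κ * t))
    {s t : ℝ} (hs : 0 < s) (hst : s ≤ t)
    (hmeas : AEStronglyMeasurable η' (volume.restrict (Ioo 0 s)))
    (hrepr : η s = ∫ y in (0 : ℝ)..s, η' y)
    (hwη' : IntegrableOn (fun y => w y * ‖η' y‖ ^ 2) (Ioo 0 t)) :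
    w s * ‖η s‖ ^ 2 ≤ s * (Real.exp (κ * t) * ∫ y in Ioo 0 t, w y * ‖η' y‖ ^ 2) := by
  have hI : 0 ≤ ∫ y in Ioo 0 t, w y * ‖η' y‖ ^ 2 :=
    setIntegral_nonneg measurableSet_Ioo fun y hy => mul_nonneg (hw0 y hy.1) (sq_nonneg _)
  rcases (hw0 s hs).eq_or_lt with hzero | hpos
  · rw [← hzero, zero_mul]
    positivity
  -- a positive weight at `s` bounds the weight below on `(0, s)`, so `‖η'‖²` is integrable there
  have hsq : IntegrableOn (fun y => ‖η' y‖ ^ 2) (Ioo 0 s) := by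
    refine ((hwη'.mono_set (Ioo_subset_Ioo_right hst)).const_mul
      (Real.exp (κ * t) / w s)).mono' (hmeas.norm.pow 2) ?_
    filter_upwards [ae_restrict_mem measurableSet_Ioo] with y hy
    rw [Real.norm_of_nonneg (sq_nonneg _), div_mul_eq_mul_div, le_div_iff₀ hpos, ← mul_assoc,
      mul_comm (_ ^ 2)]
    gcongr
    exact le_exp_mul_of_growth_le hκ hw0 hw hy.1 hy.2.le hst
  calc w s * ‖η s‖ ^ 2 ≤ w s * (s * ∫ y in Ioo 0 s, ‖η' y‖ ^ 2) := by
        gcongr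
        simpa [hrepr] using sq_norm_intervalIntegral_le hs.le hsq
    _ = s * (w s * ∫ y in Ioo 0 s, ‖η' y‖ ^ 2) := by ring
    _ ≤ s * (Real.exp (κ * t) * ∫ y in Ioo 0 t, w y * ‖η' y‖ ^ 2) :=
        mul_le_mul_of_nonneg_left (mul_setIntegral_sq_norm_le hκ hw0 hw hst hsq hwη') hs.le

lemma setIntegral_mul_sq_norm_le (hκ : 0 ≤ κ) (hw0 : ∀ s ∈ Ioi (0 : ℝ), 0 ≤ w s)
    (hw : ∀ s ∈ Ioi (0 : ℝ), ∀ t : ℝ, 0 ≤ t → w (s + t) ≤ w s * Real.exp (κ * t))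
    {t : ℝ} (ht : 0 ≤ t) (hη' : IntervalIntegrable η' volume 0 t)
    (hrepr : ∀ s ∈ Ioo 0 t, η s = ∫ y in (0 : ℝ)..s, η' y)
    (hwη' : IntegrableOn (fun y => w y * ‖η' y‖ ^ 2) (Ioo 0 t)) :
    ∫ s in Ioo 0 t, w s * ‖η s‖ ^ 2
      ≤ t ^ 2 * (Real.exp (κ * t) * ∫ y in Ioo 0 t, w y * ‖η' y‖ ^ 2) := by
  set C := Real.exp (κ * t) * ∫ y in Ioo 0 t, w y * ‖η' y‖ ^ 2
  have hC : 0 ≤ C := mul_nonneg (Real.exp_pos _).le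
    (setIntegral_nonneg measurableSet_Ioo fun y hy => mul_nonneg (hw0 y hy.1) (sq_nonneg _))
  calc ∫ s in Ioo 0 t, w s * ‖η s‖ ^ 2 ≤ ∫ _ in Ioo 0 t, t * C := by
        refine integral_mono_of_nonneg ?_ (integrableOn_const measure_Ioo_lt_top.ne) ?_
        · filter_upwards [ae_restrict_mem measurableSet_Ioo] with s hs
          exact mul_nonneg (hw0 s hs.1) (sq_nonneg _)
        · filter_upwards [ae_restrict_mem measurableSet_Ioo] with s hs
          have hmeas : AEStronglyMeasurable η' (volume.restrict (Ioo 0 s)) :=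
            (hη'.1.mono_set (Ioo_subset_Ioc_self.trans (Ioc_subset_Ioc_right hs.2.le)))
              |>.aestronglyMeasurable
          calc w s * ‖η s‖ ^ 2 ≤ s * C := mul_sq_norm_le_of_eq_intervalIntegral hκ hw0 hw hs.1
                hs.2.le hmeas (hrepr s hs) hwη'
            _ ≤ t * C := by gcongr; exact hs.2.le
    _ = t ^ 2 * C := by
        rw [setIntegral_const, smul_eq_mul, Real.volume_real_Ioo_of_le ht]
        ring

end Weighted

theorem mgt_difference_quotient_piece_general
    {E : Type*} [NormedAddCommGroup E] [InnerProductSpace ℝ E]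
    (α δ : ℝ) (hδα : δ < α)
    (g' : ℝ → ℝ)
    (hg'_nonpos : ∀ s ∈ Set.Ioi (0 : ℝ), g' s ≤ 0)
    (hexp : ∀ s ∈ Set.Ioi (0 : ℝ), ∀ t : ℝ, 0 ≤ t →
      -g' (s + t) ≤ -g' s * Real.exp ((α - δ) * t))
    (η η' : ℝ → E)
    (hη'loc : ∀ ν : ℝ, 0 < ν → IntervalIntegrable η' MeasureTheory.volume 0 ν)
    (hrepr : ∀ s : ℝ, 0 < s → η s = ∫ y in (0 : ℝ)..s, η' y)
    (hη'_int : IntegrableOn (fun y => -g' y * ‖η' y‖ ^ 2) (Set.Ioi 0)) :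
    (∀ t : ℝ, 0 < t →
      (1 / t ^ 2) * ∫ s in Set.Ioo (0 : ℝ) t, -g' s * ‖η s‖ ^ 2
        ≤ Real.exp (2 * ((α - δ) / 2) * t) * ∫ y in Set.Ioo (0 : ℝ) t, -g' y * ‖η' y‖ ^ 2) ∧
    Tendsto (fun t => (1 / t ^ 2) * ∫ s in Set.Ioo (0 : ℝ) t, -g' s * ‖η s‖ ^ 2)
      (nhdsWithin 0 (Set.Ioi 0)) (nhds 0) := by
  have hκ : 0 ≤ α - δ := sub_nonneg.2 hδα.le
  have hw0 : ∀ s ∈ Ioi (0 : ℝ), 0 ≤ -g' s := fun s hs => neg_nonneg.2 (hg'_nonpos s hs)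
  have bound : ∀ t : ℝ, 0 < t →
      (1 / t ^ 2) * ∫ s in Ioo (0 : ℝ) t, -g' s * ‖η s‖ ^ 2
        ≤ Real.exp (2 * ((α - δ) / 2) * t) * ∫ y in Ioo (0 : ℝ) t, -g' y * ‖η' y‖ ^ 2 := by
    intro t ht
    rw [show 2 * ((α - δ) / 2) * t = (α - δ) * t by ring, one_div_mul_eq_div,
      div_le_iff₀ (by positivity), mul_comm _ (t ^ 2)]
    exact setIntegral_mul_sq_norm_le (w := fun s => -g' s) hκ hw0 hexp ht.le (hη'loc t ht)
      (fun s hs => hrepr s hs.1) (hη'_int.mono_set Ioo_subset_Ioi_self)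
  refine ⟨bound, tendsto_of_tendsto_of_tendsto_of_le_of_le' tendsto_const_nhds ?_ ?_
    (eventually_nhdsWithin_of_forall bound)⟩
  · have hexp_lim : Tendsto (fun t => Real.exp (2 * ((α - δ) / 2) * t)) (𝓝[>] 0) (𝓝 1) := by
      simpa using ((continuous_const_mul _).rexp.tendsto 0).mono_left nhdsWithin_le_nhds
    simpa using hexp_lim.mul (tendsto_setIntegral_Ioo_nhdsGT_zero hη'_int)
  · filter_upwards [self_mem_nhdsWithin] with t ht
    exact mul_nonneg (by positivity)
      (setIntegral_nonneg measurableSet_Ioo fun s hs => mul_nonneg (hw0 s hs.1) (sq_nonneg _))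

/-- with `ω = (α-δ)/2`, the piece of the difference quotient of the
right-translation semigroup satisfies
`(1/t²) ∫₀^t -g'(s) ‖η(s)‖² ds ≤ e^{2ωt} ∫₀^t -g'(y) ‖η'(y)‖² dy`, and tends to `0`
as `t → 0⁺`. -/
theorem mgt_difference_quotient_piece
    {E : Type*} [NormedAddCommGroup E] [InnerProductSpace ℝ E] [CompleteSpace E]
    (α δ : ℝ) (hδ : 0 < δ) (hδα : δ < α)
    (g' : ℝ → ℝ)
    (hg'_nonpos : ∀ s ∈ Set.Ioi (0 : ℝ), g' s ≤ 0)
    (hexp : ∀ s ∈ Set.Ioi (0 : ℝ), ∀ t : ℝ, 0 ≤ t →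
      -g' (s + t) ≤ -g' s * Real.exp ((α - δ) * t))
    (η η' : ℝ → E)
    (hη'loc : ∀ ν : ℝ, 0 < ν → IntervalIntegrable η' MeasureTheory.volume 0 ν)
    (hrepr : ∀ s : ℝ, 0 < s → η s = ∫ y in (0 : ℝ)..s, η' y)
    (hη'_int : IntegrableOn (fun y => -g' y * ‖η' y‖ ^ 2) (Set.Ioi 0)) :
    (∀ t : ℝ, 0 < t →
      (1 / t ^ 2) * ∫ s in Set.Ioo (0 : ℝ) t, -g' s * ‖η s‖ ^ 2
        ≤ Real.exp (2 * ((α - δ) / 2) * t) * ∫ y in Set.Ioo (0 : ℝ) t, -g' y * ‖η' y‖ ^ 2) ∧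
    Tendsto (fun t => (1 / t ^ 2) * ∫ s in Set.Ioo (0 : ℝ) t, -g' s * ‖η s‖ ^ 2)
      (nhdsWithin 0 (Set.Ioi 0)) (nhds 0) :=
  mgt_difference_quotient_piece_general α δ hδα g' hg'_nonpos hexp η η' hη'loc hrepr hη'_int
end

section
/- Let V and H be real Hilbert spaces and ι : V → H a continuous linear map with ‖ι v‖_H ≤ c ‖v‖_V for all v ∈ V. Let α, β, γ > 0 with ϰ := β − γ/α > 0, and let g : (0,∞) → ℝ be such that g and g' are absolutely continuous and summable on (0,∞), g ≥ 0, g' ≤ 0, and κ := ∫₀^∞ g(s) ds < γ. Then there exists C ≥ 1, depending only on α, β, γ, κ, c, such that for all u, v ∈ V, w ∈ H and every strongly measurable η : (0,∞) → V with ∫₀^∞ −g'(s) ‖η(s)‖_V² ds < ∞ and ∫₀^∞ g(s) ‖η(s)‖_V² ds < ∞, setting E = ‖u‖_V² + ‖v‖_V² + ‖w‖_H² + ∫₀^∞ −g'(s) ‖η(s)‖_V² ds and F = ((γ−κ)/α) ‖v + α u‖_V² + ((ϰα + κ)/α) ‖v‖_V² + ‖w + α ι v‖_H² + ∫₀^∞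 −g'(s) ‖η(s)‖_V² ds + α ∫₀^∞ g(s) ‖η(s)‖_V² ds + 2 ∫₀^∞ g(s) ⟨η(s), v⟩_V ds, one has (1/C) E ≤ F ≤ C (E + ∫₀^∞ g(s) ‖η(s)‖_V² ds). -/
open MeasureTheory

/-! Writing `κ = ∫ g`, the only indefinite part of `F` is the cross term `2 ∫ g ⟪η, v⟫`.
Expanding `0 ≤ ∫ g ‖t η + v‖²` gives `-2 t ∫ g ⟪η, v⟫ ≤ t² ∫ g ‖η‖² + κ ‖v‖²` for every real `t`.
With `t = α` the cross term is absorbed by `α ∫ g ‖η‖² + (κ / α) ‖v‖²`, so that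
`F ≥ ((γ - κ) / α) ‖v + α u‖² + ϰ ‖v‖² + ‖w + α ι v‖² + ∫ -g' ‖η‖²`; with `t = -1` it is bounded
above by `∫ g ‖η‖² + κ ‖v‖²`. What remains compares positive combinations of squared norms,
using `‖x + y‖² ≤ 2 ‖x‖² + 2 ‖y‖²` to pass between `u, w` and `v + α u, w + α ι v`. -/

theorem Finset.exists_sum_mul_le_mul_sum {ι : Type*} (s : Finset ι) (a b : ι → ℝ)
    (ha : ∀ i ∈ s, 0 < a i) :
    ∃ K, 0 ≤ K ∧ ∀ x : ι → ℝ, (∀ i ∈ s, 0 ≤ x i) →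
      ∑ i ∈ s, b i * x i ≤ K * ∑ i ∈ s, a i * x i := by
  have hK : ∀ i ∈ s, 0 ≤ |b i| / a i := fun i hi => div_nonneg (abs_nonneg _) (ha i hi).le
  refine ⟨∑ i ∈ s, |b i| / a i, sum_nonneg hK, fun x hx => ?_⟩
  rw [mul_sum]
  refine sum_le_sum fun i hi => ?_
  calc b i * x i ≤ |b i| / a i * (a i * x i) := by
        rw [← mul_assoc, div_mul_cancel₀ _ (ha i hi).ne']
        exact mul_le_mul_of_nonneg_right (le_abs_self _) (hx i hi)
    _ ≤ _ := mul_le_mul_of_nonneg_right (single_le_sum (f := fun j => |b j| / a j) hK hi)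
        (mul_nonneg (ha i hi).le (hx i hi))

theorem norm_add_sq_le_two_mul {E : Type*} [SeminormedAddGroup E] (x y : E) :
    ‖x + y‖ ^ 2 ≤ 2 * (‖x‖ ^ 2 + ‖y‖ ^ 2) :=
  (pow_le_pow_left₀ (norm_nonneg _) (norm_add_le x y) 2).trans add_sq_le

theorem norm_sq_le_two_mul_norm_add_sq_add {E : Type*} [SeminormedAddGroup E] (x y : E) :
    ‖x‖ ^ 2 ≤ 2 * (‖x + y‖ ^ 2 + ‖y‖ ^ 2) := by
  simpa using norm_add_sq_le_two_mul (x + y) (-y)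

section MemoryKernel

variable {S E : Type*} [MeasurableSpace S] {μ : Measure S}
  [NormedAddCommGroup E] [InnerProductSpace ℝ E] {g : S → ℝ} {η : S → E}

theorem MeasureTheory.Integrable.mul_inner_of_mul_norm_sq (hg : Integrable g μ)
    (hg0 : 0 ≤ᵐ[μ] g) (hη : AEStronglyMeasurable η μ)
    (hgη : Integrable (fun x => g x * ‖η x‖ ^ 2) μ) (v : E) :
    Integrable (fun x => g x * inner ℝ (η x) v) μ := by
  refine (hgη.add (hg.mul_const (‖v‖ ^ 2))).mono'
    (hg.aestronglyMeasurable.mul (hη.inner aestronglyMeasurable_const)) ?_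
  filter_upwards [hg0] with x hx
  have hinner : |inner ℝ (η x) v| ≤ ‖η x‖ ^ 2 + ‖v‖ ^ 2 :=
    (abs_real_inner_le_norm _ _).trans (by nlinarith [sq_nonneg (‖η x‖ - ‖v‖)])
  rw [Real.norm_eq_abs, abs_mul, abs_of_nonneg hx]
  exact (mul_le_mul_of_nonneg_left hinner hx).trans_eq (mul_add _ _ _)

theorem integral_mul_norm_smul_add_sq (hg : Integrable g μ) (hg0 : 0 ≤ᵐ[μ] g)
    (hη : AEStronglyMeasurable η μ) (hgη : Integrable (fun x => g x * ‖η x‖ ^ 2) μ)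
    (t : ℝ) (v : E) :
    ∫ x, g x * ‖t • η x + v‖ ^ 2 ∂μ = t ^ 2 * ∫ x, g x * ‖η x‖ ^ 2 ∂μ
      + 2 * t * ∫ x, g x * inner ℝ (η x) v ∂μ + ‖v‖ ^ 2 * ∫ x, g x ∂μ := by
  have hexpand : (fun x => g x * ‖t • η x + v‖ ^ 2) = fun x =>
      t ^ 2 * (g x * ‖η x‖ ^ 2) + 2 * t * (g x * inner ℝ (η x) v) + ‖v‖ ^ 2 * g x := by
    ext x
    rw [norm_add_sq_real, norm_smul, real_inner_smul_left, Real.norm_eq_abs, mul_pow, sq_abs]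
    ring
  have hnorm := hgη.const_mul (t ^ 2)
  have hinner := (hg.mul_inner_of_mul_norm_sq hg0 hη hgη v).const_mul (2 * t)
  rw [hexpand, integral_add (by exact hnorm.add hinner) (hg.const_mul _),
    integral_add hnorm hinner, integral_const_mul, integral_const_mul,
    integral_const_mul]

theorem integral_mul_norm_smul_add_sq_nonneg (hg : Integrable g μ) (hg0 : 0 ≤ᵐ[μ] g)
    (hη : AEStronglyMeasurable η μ) (hgη : Integrable (fun x => g x * ‖η x‖ ^ 2) μ)
    (t : ℝ) (v : E) :
    0 ≤ t ^ 2 * ∫ x, g x * ‖η x‖ ^ 2 ∂μ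
      + 2 * t * ∫ x, g x * inner ℝ (η x) v ∂μ + ‖v‖ ^ 2 * ∫ x, g x ∂μ :=
  integral_mul_norm_smul_add_sq hg hg0 hη hgη t v ▸
    integral_nonneg_of_ae (hg0.mono fun _ hx => mul_nonneg hx (sq_nonneg _))

end MemoryKernel

theorem exists_const_energy_equiv_of_bounds {α c κ ϰ a : ℝ} (hα : 0 < α) (hϰ : 0 < ϰ)
    (ha : 0 < a) :
    ∃ C : ℝ, 1 ≤ C ∧ ∀ ⦃U Y W X Z I₁ I₂ J : ℝ⦄, 0 ≤ U → 0 ≤ Y → 0 ≤ W → 0 ≤ X → 0 ≤ Z →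
      0 ≤ I₁ → 0 ≤ I₂ → X ≤ 2 * (Y + α ^ 2 * U) → α ^ 2 * U ≤ 2 * (X + Y) →
      Z ≤ 2 * (W + (α * c) ^ 2 * Y) → W ≤ 2 * (Z + (α * c) ^ 2 * Y) →
      (∀ t : ℝ, 0 ≤ t ^ 2 * I₂ + 2 * t * J + Y * κ) →
      1 / C * (U + Y + W + I₁) ≤ a * X + (ϰ * α + κ) / α * Y + Z + I₁ + α * I₂ + 2 * J ∧
      a * X + (ϰ * α + κ) / α * Y + Z + I₁ + α * I₂ + 2 * J ≤ C * (U + Y + W + I₁ + I₂) := by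
  -- The weights `b` bound `U + Y + W + I₁` by `X, Y, Z, I₁` and `F` by `U, Y, W, I₁, I₂`.
  obtain ⟨K, hK0, hK⟩ := Finset.exists_sum_mul_le_mul_sum Finset.univ ![a, ϰ, 1, 1]
    ![2 / α ^ 2, 1 + 2 / α ^ 2 + 2 * (α * c) ^ 2, 2, 1]
    (by simp [Fin.forall_fin_succ, ha, hϰ])
  obtain ⟨K', hK'0, hK'⟩ := Finset.exists_sum_mul_le_mul_sum Finset.univ (fun _ : Fin 5 => 1)
    ![2 * a * α ^ 2, 2 * a + (ϰ * α + κ) / α + κ + 2 * (α * c) ^ 2, 2, 1, α + 1] (by simp)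
  refine ⟨1 + K + K', by linarith,
    fun U Y W X Z I₁ I₂ J hU hY hW hX hZ hI₁ hI₂ hXU hUX hZW hWZ hq => ⟨?_, ?_⟩⟩
  · have hGF :
        a * X + ϰ * Y + Z + I₁ ≤ a * X + (ϰ * α + κ) / α * Y + Z + I₁ + α * I₂ + 2 * J := by
      have hFG : (ϰ * α + κ) / α * Y + α * I₂ + 2 * J
          = ϰ * Y + (α ^ 2 * I₂ + 2 * α * J + Y * κ) / α := by
        field_simp
        ring
      linarith [div_nonneg (hq α) hα.le]
    have hEG : U + Y + W + I₁ ≤ K * (a * X + ϰ * Y + Z + I₁) := by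
      have hU' : U ≤ 2 / α ^ 2 * (X + Y) := by
        rw [div_mul_eq_mul_div, le_div_iff₀ (by positivity)]
        linarith
      have hb := hK ![X, Y, Z, I₁] (by simp [Fin.forall_fin_succ, *])
      simp only [Fin.sum_univ_four, Matrix.cons_val] at hb
      linarith
    have hG : 0 ≤ a * X + ϰ * Y + Z + I₁ := by positivity
    rw [one_div_mul_eq_div, div_le_iff₀ (by linarith)]
    calc U + Y + W + I₁ ≤ K * (a * X + ϰ * Y + Z + I₁) := hEG
      _ ≤ (1 + K + K') * (a * X + (ϰ * α + κ) / α * Y + Z + I₁ + α * I₂ + 2 * J) := by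
        gcongr
        linarith
      _ = _ := mul_comm _ _
  · have hb := hK' ![U, Y, W, I₁, I₂] (by simp [Fin.forall_fin_succ, *])
    simp only [Fin.sum_univ_five, Matrix.cons_val] at hb
    nlinarith [hq (-1), mul_le_mul_of_nonneg_left hXU ha.le]

theorem mgt_energy_functional_equivalence_general
    {V H : Type*} [NormedAddCommGroup V] [InnerProductSpace ℝ V]
    [NormedAddCommGroup H] [InnerProductSpace ℝ H]
    (ι : V →L[ℝ] H) (c : ℝ) (hι : ∀ v : V, ‖ι v‖ ≤ c * ‖v‖)
    (α β γ : ℝ) (hα : 0 < α) (hϰ : 0 < β - γ / α)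
    (g g' : ℝ → ℝ)
    (hg_int : IntegrableOn g (Set.Ioi 0))
    (hg_nonneg : ∀ s ∈ Set.Ioi (0 : ℝ), 0 ≤ g s)
    (hg'_nonpos : ∀ s ∈ Set.Ioi (0 : ℝ), g' s ≤ 0)
    (hκγ : (∫ s in Set.Ioi (0 : ℝ), g s) < γ) :
    ∃ C : ℝ, 1 ≤ C ∧ ∀ (u v : V) (w : H) (η : ℝ → V),
      AEStronglyMeasurable η (MeasureTheory.volume.restrict (Set.Ioi 0)) →
      IntegrableOn (fun s => -g' s * ‖η s‖ ^ 2) (Set.Ioi 0) →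
      IntegrableOn (fun s => g s * ‖η s‖ ^ 2) (Set.Ioi 0) →
      (1 / C) * (‖u‖ ^ 2 + ‖v‖ ^ 2 + ‖w‖ ^ 2 + ∫ s in Set.Ioi (0 : ℝ), -g' s * ‖η s‖ ^ 2)
        ≤ ((γ - (∫ s in Set.Ioi (0 : ℝ), g s)) / α) * ‖v + α • u‖ ^ 2
          + (((β - γ / α) * α + (∫ s in Set.Ioi (0 : ℝ), g s)) / α) * ‖v‖ ^ 2
          + ‖w + α • ι v‖ ^ 2
          + (∫ s in Set.Ioi (0 : ℝ), -g' s * ‖η s‖ ^ 2)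
          + α * (∫ s in Set.Ioi (0 : ℝ), g s * ‖η s‖ ^ 2)
          + 2 * (∫ s in Set.Ioi (0 : ℝ), g s * (inner ℝ (η s) v : ℝ)) ∧
      ((γ - (∫ s in Set.Ioi (0 : ℝ), g s)) / α) * ‖v + α • u‖ ^ 2
          + (((β - γ / α) * α + (∫ s in Set.Ioi (0 : ℝ), g s)) / α) * ‖v‖ ^ 2
          + ‖w + α • ι v‖ ^ 2
          + (∫ s in Set.Ioi (0 : ℝ), -g' s * ‖η s‖ ^ 2)
          + α * (∫ s in Set.Ioi (0 : ℝ), g s * ‖η s‖ ^ 2)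
          + 2 * (∫ s in Set.Ioi (0 : ℝ), g s * (inner ℝ (η s) v : ℝ))
        ≤ C * (‖u‖ ^ 2 + ‖v‖ ^ 2 + ‖w‖ ^ 2 + (∫ s in Set.Ioi (0 : ℝ), -g' s * ‖η s‖ ^ 2)
            + ∫ s in Set.Ioi (0 : ℝ), g s * ‖η s‖ ^ 2) := by
  obtain ⟨C, hC1, hC⟩ := exists_const_energy_equiv_of_bounds (c := c)
    (κ := ∫ s in Set.Ioi (0 : ℝ), g s) hα hϰ (div_pos (sub_pos.2 hκγ) hα)
  refine ⟨C, hC1, fun u v w η hη _ hgη => ?_⟩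
  have hg0 : 0 ≤ᵐ[volume.restrict (Set.Ioi 0)] g :=
    ae_restrict_of_forall_mem measurableSet_Ioi hg_nonneg
  have hαu : ‖α • u‖ ^ 2 = α ^ 2 * ‖u‖ ^ 2 := by
    rw [norm_smul, mul_pow, Real.norm_eq_abs, sq_abs]
  have hαιv : ‖α • ι v‖ ^ 2 ≤ (α * c) ^ 2 * ‖v‖ ^ 2 := by
    rw [← mul_pow, norm_smul, Real.norm_eq_abs, abs_of_pos hα, mul_assoc]
    gcongr
    exact hι v
  refine hC (by positivity) (by positivity) (by positivity) (by positivity) (by positivity)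
    (setIntegral_nonneg measurableSet_Ioi fun s hs =>
      mul_nonneg (neg_nonneg.2 (hg'_nonpos s hs)) (sq_nonneg _))
    (integral_nonneg_of_ae (hg0.mono fun s hs => mul_nonneg hs (sq_nonneg _)))
    (hαu ▸ norm_add_sq_le_two_mul v (α • u))
    (hαu ▸ add_comm v (α • u) ▸ norm_sq_le_two_mul_norm_add_sq_add (α • u) v)
    ((norm_add_sq_le_two_mul w _).trans (by gcongr))
    ((norm_sq_le_two_mul_norm_add_sq_add w _).trans (by gcongr))
    (integral_mul_norm_smul_add_sq_nonneg hg_int hg0 hη hgη · v)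

/-- Lemma 7.1 of the paper: the energy-like functional `F` is
"almost" equivalent to the energy `E`:
`(1/C) E ≤ F ≤ C (E + ∫₀^∞ g(s) ‖η(s)‖² ds)`. -/
theorem mgt_energy_functional_equivalence
    {V H : Type*} [NormedAddCommGroup V] [InnerProductSpace ℝ V] [CompleteSpace V]
    [NormedAddCommGroup H] [InnerProductSpace ℝ H] [CompleteSpace H]
    (ι : V →L[ℝ] H) (c : ℝ) (hι : ∀ v : V, ‖ι v‖ ≤ c * ‖v‖)
    (α β γ : ℝ) (hα : 0 < α) (hβ : 0 < β) (hγ : 0 < γ) (hϰ : 0 < β - γ / α)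
    (g g' : ℝ → ℝ)
    (hgderiv : ∀ s ∈ Set.Ioi (0 : ℝ), HasDerivAt g (g' s) s)
    (hFTC : ∀ a b : ℝ, 0 < a → a ≤ b → g b - g a = ∫ s in a..b, g' s)
    (hg_int : IntegrableOn g (Set.Ioi 0))
    (hg'_int : IntegrableOn g' (Set.Ioi 0))
    (hg_nonneg : ∀ s ∈ Set.Ioi (0 : ℝ), 0 ≤ g s)
    (hg'_nonpos : ∀ s ∈ Set.Ioi (0 : ℝ), g' s ≤ 0)
    (hκγ : (∫ s in Set.Ioi (0 : ℝ), g s) < γ) :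
    ∃ C : ℝ, 1 ≤ C ∧ ∀ (u v : V) (w : H) (η : ℝ → V),
      AEStronglyMeasurable η (MeasureTheory.volume.restrict (Set.Ioi 0)) →
      IntegrableOn (fun s => -g' s * ‖η s‖ ^ 2) (Set.Ioi 0) →
      IntegrableOn (fun s => g s * ‖η s‖ ^ 2) (Set.Ioi 0) →
      (1 / C) * (‖u‖ ^ 2 + ‖v‖ ^ 2 + ‖w‖ ^ 2 + ∫ s in Set.Ioi (0 : ℝ), -g' s * ‖η s‖ ^ 2)
        ≤ ((γ - (∫ s in Set.Ioi (0 : ℝ), g s)) / α) * ‖v + α • u‖ ^ 2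
          + (((β - γ / α) * α + (∫ s in Set.Ioi (0 : ℝ), g s)) / α) * ‖v‖ ^ 2
          + ‖w + α • ι v‖ ^ 2
          + (∫ s in Set.Ioi (0 : ℝ), -g' s * ‖η s‖ ^ 2)
          + α * (∫ s in Set.Ioi (0 : ℝ), g s * ‖η s‖ ^ 2)
          + 2 * (∫ s in Set.Ioi (0 : ℝ), g s * (inner ℝ (η s) v : ℝ)) ∧
      ((γ - (∫ s in Set.Ioi (0 : ℝ), g s)) / α) * ‖v + α • u‖ ^ 2
          + (((β - γ / α) * α + (∫ s in Set.Ioi (0 : ℝ), g s)) / α) * ‖v‖ ^ 2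
          + ‖w + α • ι v‖ ^ 2
          + (∫ s in Set.Ioi (0 : ℝ), -g' s * ‖η s‖ ^ 2)
          + α * (∫ s in Set.Ioi (0 : ℝ), g s * ‖η s‖ ^ 2)
          + 2 * (∫ s in Set.Ioi (0 : ℝ), g s * (inner ℝ (η s) v : ℝ))
        ≤ C * (‖u‖ ^ 2 + ‖v‖ ^ 2 + ‖w‖ ^ 2 + (∫ s in Set.Ioi (0 : ℝ), -g' s * ‖η s‖ ^ 2)
            + ∫ s in Set.Ioi (0 : ℝ), g s * ‖η s‖ ^ 2) :=
  mgt_energy_functional_equivalence_general ι c hι α β γ hα hϰ g g' hg_int hg_nonneg hg'_nonpos hκγ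
end

section
/- For each integer n ≥ 2 set ε_n = e^{−(n²+n+1)}/(n+2) and I_n = [n², n² + n + 1]. Let f : (0,∞) → ℝ satisfy 0 < f(s) ≤ e^{−s} for all s > 0 and f(s) = ε_n + ε_n (s − n²) for all s ∈ I_n and all n ≥ 2, and define g(s) = ∫_s^∞ f(y) dy. Then for every δ > 0 the differential inequality g'(s) + δ g(s) ≤ 0 fails on a set of positive measure; more precisely, for every δ > 0 there exist arbitrarily large n and τ ∈ [0,1] such that −f(n² + τ) + δ g(n² + τ) > 0. -/
open MeasureTheory Filter Topology

/-- The slope `ε_n = e^{-(n²+n+1)}/(n+2)` of the paper's counterexample. -/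
noncomputable def epsSlope (n : ℕ) : ℝ :=
  Real.exp (-((n : ℝ) ^ 2 + n + 1)) / (n + 2)

/-! At `s = n²` the kernel has `f(s) = ε_n`, while `g(s) = ∫_s^∞ f ≥ (n + 1) ε_n` because
`f ≥ ε_n` on all of `I_n`, which has length `n + 1`. Hence
`-f(s) + δ g(s) ≥ (δ (n + 1) - 1) ε_n > 0` as soon as `δ (n + 1) > 1`. -/

lemma epsSlope_pos (n : ℕ) : 0 < epsSlope n := by
  unfold epsSlope
  positivity

theorem setIntegral_Ioc_le_setIntegral_Ioi {f : ℝ → ℝ} {a b : ℝ}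
    (hf : IntegrableOn f (Set.Ioi a)) (hf_nonneg : ∀ x ∈ Set.Ioi a, 0 ≤ f x) :
    ∫ x in Set.Ioc a b, f x ≤ ∫ x in Set.Ioi a, f x :=
  setIntegral_mono_set hf (ae_restrict_of_forall_mem measurableSet_Ioi hf_nonneg)
    Set.Ioc_subset_Ioi_self.eventuallyLE

theorem mul_sub_le_setIntegral_Ioc {f : ℝ → ℝ} {a b c : ℝ} (hab : a ≤ b)
    (hf : IntegrableOn f (Set.Ioc a b)) (hc : ∀ x ∈ Set.Ioc a b, c ≤ f x) :
    c * (b - a) ≤ ∫ x in Set.Ioc a b, f x := by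
  have h := setIntegral_ge_of_const_le measurableSet_Ioc (by simp) hc hf
  rwa [Real.volume_real_Ioc_of_le hab, smul_eq_mul, mul_comm] at h

theorem lt_mul_setIntegral_Ioi {f : ℝ → ℝ} {a c δ L : ℝ} (hc : 0 < c) (hδ : 0 < δ)
    (hδL : 1 < δ * L) (hf : IntegrableOn f (Set.Ioi a))
    (hf_nonneg : ∀ x ∈ Set.Ioi a, 0 ≤ f x) (hfc : ∀ x ∈ Set.Ioc a (a + L), c ≤ f x) :
    c < δ * ∫ x in Set.Ioi a, f x := by
  have hL : 0 ≤ L := (pos_of_mul_pos_right (one_pos.trans hδL) hδ.le).le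
  have hIoc : c * L ≤ ∫ x in Set.Ioc a (a + L), f x := by
    simpa using mul_sub_le_setIntegral_Ioc (by linarith) (hf.mono_set Set.Ioc_subset_Ioi_self) hfc
  calc c < c * (δ * L) := lt_mul_of_one_lt_right hc hδL
    _ = δ * (c * L) := by ring
    _ ≤ δ * ∫ x in Set.Ioi a, f x :=
      mul_le_mul_of_nonneg_left (hIoc.trans (setIntegral_Ioc_le_setIntegral_Ioi hf hf_nonneg))
        hδ.le

lemma exists_nat_ge_two_one_lt_mul_succ {δ : ℝ} (hδ : 0 < δ) (N : ℕ) :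
    ∃ n : ℕ, N ≤ n ∧ 2 ≤ n ∧ 1 < δ * (n + 1) := by
  obtain ⟨m, hm⟩ := exists_nat_gt (1 / δ)
  refine ⟨max N (max 2 m), le_max_left _ _, le_max_of_le_right (le_max_left _ _), ?_⟩
  have hmn : (m : ℝ) ≤ max N (max 2 m) := by exact_mod_cast le_max_of_le_right (le_max_right _ _)
  rw [div_lt_iff₀ hδ] at hm
  nlinarith

theorem mgt_dafermos_fails_general (f : ℝ → ℝ)
    (hf_pos : ∀ s ∈ Set.Ioi (0 : ℝ), 0 < f s)
    (hf_int : IntegrableOn f (Set.Ioi 0))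
    (hf_lin : ∀ n : ℕ, 2 ≤ n → ∀ s ∈ Set.Icc ((n : ℝ) ^ 2) ((n : ℝ) ^ 2 + n + 1),
      f s = epsSlope n + epsSlope n * (s - (n : ℝ) ^ 2)) :
    ∀ δ : ℝ, 0 < δ → ∀ N : ℕ, ∃ n : ℕ, N ≤ n ∧ 2 ≤ n ∧
      ∃ τ ∈ Set.Icc (0 : ℝ) 1,
        -f ((n : ℝ) ^ 2 + τ) +
          δ * (∫ y in Set.Ioi ((n : ℝ) ^ 2 + τ), f y) > 0 := by
  intro δ hδ N
  obtain ⟨n, hNn, h2n, hδn⟩ := exists_nat_ge_two_one_lt_mul_succ hδ N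
  refine ⟨n, hNn, h2n, 0, ⟨le_rfl, zero_le_one⟩, ?_⟩
  have hsq : (0 : ℝ) < (n : ℝ) ^ 2 := by positivity
  have hf_start : f ((n : ℝ) ^ 2) = epsSlope n := by
    rw [hf_lin n h2n _ ⟨le_rfl, by linarith [(n.cast_nonneg : (0 : ℝ) ≤ n)]⟩]
    ring
  have hf_ge : ∀ x ∈ Set.Ioc ((n : ℝ) ^ 2) ((n : ℝ) ^ 2 + (n + 1)), epsSlope n ≤ f x := by
    intro x hx
    rw [hf_lin n h2n x ⟨hx.1.le, by linarith [hx.2]⟩]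
    nlinarith [epsSlope_pos n, hx.1]
  have key := lt_mul_setIntegral_Ioi (epsSlope_pos n) hδ hδn
    (hf_int.mono_set (Set.Ioi_subset_Ioi hsq.le)) (fun x hx => (hf_pos x (hsq.trans hx)).le) hf_ge
  rw [add_zero, hf_start]
  linarith

/-- the kernel `g(s) = ∫_s^∞ f(y) dy` built from the piecewise-linear `f`
fails the Dafermos condition `g' + δ g ≤ 0`: for every `δ > 0` there are arbitrarily
large `n` and `τ ∈ [0,1]` with `-f(n² + τ) + δ g(n² + τ) > 0`. -/
theorem mgt_dafermos_fails (f : ℝ → ℝ)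
    (hf_pos : ∀ s ∈ Set.Ioi (0 : ℝ), 0 < f s)
    (hf_le : ∀ s ∈ Set.Ioi (0 : ℝ), f s ≤ Real.exp (-s))
    (hf_int : IntegrableOn f (Set.Ioi 0))
    (hf_lin : ∀ n : ℕ, 2 ≤ n → ∀ s ∈ Set.Icc ((n : ℝ) ^ 2) ((n : ℝ) ^ 2 + n + 1),
      f s = epsSlope n + epsSlope n * (s - (n : ℝ) ^ 2)) :
    ∀ δ : ℝ, 0 < δ → ∀ N : ℕ, ∃ n : ℕ, N ≤ n ∧ 2 ≤ n ∧
      ∃ τ ∈ Set.Icc (0 : ℝ) 1,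
        -f ((n : ℝ) ^ 2 + τ) +
          δ * (∫ y in Set.Ioi ((n : ℝ) ^ 2 + τ), f y) > 0 :=
  mgt_dafermos_fails_general f hf_pos hf_int hf_lin
end

section
/- For each integer n ≥ 2 set ε_n = e^{−(n²+n+1)}/(n+2) and I_n = [n², n² + n + 1]. Let f : (0,∞) → ℝ satisfy 0 < f(s) ≤ e^{−s} for all s > 0 and f(s) = ε_n + ε_n (s − n²) for all s ∈ I_n and all n ≥ 2, and define g(s) = ∫_s^∞ f(y) dy. Then g is not convex on (0,∞). -/
open MeasureTheory Filter Topology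

/-- the kernel `g(s) = ∫_s^∞ f(y) dy` built from the piecewise-linear `f`
is not convex on `(0,∞)`. -/
theorem mgt_counterexample_not_convex (f : ℝ → ℝ)
    (hf_pos : ∀ s ∈ Set.Ioi (0 : ℝ), 0 < f s)
    (hf_le : ∀ s ∈ Set.Ioi (0 : ℝ), f s ≤ Real.exp (-s))
    (hf_int : IntegrableOn f (Set.Ioi 0))
    (hf_lin : ∀ n : ℕ, 2 ≤ n → ∀ s ∈ Set.Icc ((n : ℝ) ^ 2) ((n : ℝ) ^ 2 + n + 1),
      f s = epsSlope n + epsSlope n * (s - (n : ℝ) ^ 2)) :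
    ¬ ConvexOn ℝ (Set.Ioi (0 : ℝ)) (fun s => ∫ y in Set.Ioi s, f y) := by
  intro hconv
  set ε : ℝ := epsSlope 2 with hε_def
  have hε : 0 < ε := div_pos (Real.exp_pos _) (by norm_num)
  set g : ℝ → ℝ := fun s => ∫ y in Set.Ioi s, f y with hg
  -- splitting lemma
  have hsplit : ∀ a b : ℝ, 0 < a → a ≤ b →
      g a = (∫ y in Set.Ioc a b, f y) + g b := by
    intro a b ha hab
    have h1 : Set.Ioc a b ∪ Set.Ioi b = Set.Ioi a := Set.Ioc_union_Ioi_eq_Ioi hab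
    have hd : Disjoint (Set.Ioc a b) (Set.Ioi b) := Set.Ioc_disjoint_Ioi le_rfl
    have hint1 : IntegrableOn f (Set.Ioc a b) :=
      hf_int.mono_set (by intro x hx; exact lt_of_lt_of_le ha hx.1.le)
    have hint2 : IntegrableOn f (Set.Ioi b) :=
      hf_int.mono_set (by intro x hx; exact lt_of_le_of_lt (le_trans ha.le hab) hx)
    have := setIntegral_union hd measurableSet_Ioi hint1 hint2
    rw [h1] at this
    simpa [g] using this
  -- f equals the affine function on [4,7]
  have hlin : ∀ s ∈ Set.Icc (4 : ℝ) 7, f s = ε + ε * (s - 4) := by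
    intro s hs
    have := hf_lin 2 le_rfl s (by norm_num at hs ⊢; exact hs)
    norm_num at this
    simpa [hε_def] using this
  -- compute ∫ on Ioc a b for the affine function via FTC
  have hcalc : ∀ a b : ℝ, 4 ≤ a → a ≤ b → b ≤ 7 →
      (∫ y in Set.Ioc a b, f y)
        = (ε * b + ε * ((b - 4) ^ 2 / 2)) - (ε * a + ε * ((a - 4) ^ 2 / 2)) := by
    intro a b ha hab hb
    rw [← intervalIntegral.integral_of_le hab]
    have hcong : ∫ y in a..b, f y = ∫ y in a..b, (ε + ε * (y - 4)) := by
      apply intervalIntegral.integral_congr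
      intro x hx
      rw [Set.uIcc_of_le hab] at hx
      exact hlin x ⟨le_trans ha hx.1, le_trans hx.2 hb⟩
    rw [hcong]
    apply intervalIntegral.integral_eq_sub_of_hasDerivAt
    · intro x _
      have h1 : HasDerivAt (fun x : ℝ => ε * x) ε x := by simpa using (hasDerivAt_id x).const_mul ε
      have h2 : HasDerivAt (fun x : ℝ => ε * ((x - 4) ^ 2 / 2)) (ε * (x - 4)) x := by
        have : HasDerivAt (fun x : ℝ => (x - 4) ^ 2 / 2) (x - 4) x := by
          have hsub : HasDerivAt (fun x : ℝ => x - 4) 1 x := (hasDerivAt_id x).sub_const 4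
          have := (hsub.pow 2).div_const 2
          simpa using this
        simpa using this.const_mul ε
      exact h1.add h2
    · exact (Continuous.intervalIntegrable (by continuity) a b)
  have h45 : g 4 = 3 / 2 * ε + g 5 := by
    have := hsplit 4 5 (by norm_num) (by norm_num)
    rw [hcalc 4 5 (by norm_num) (by norm_num) (by norm_num)] at this
    rw [this]; ring
  have h56 : g 5 = 5 / 2 * ε + g 6 := by
    have := hsplit 5 6 (by norm_num) (by norm_num)
    rw [hcalc 5 6 (by norm_num) (by norm_num) (by norm_num)] at this
    rw [this]; ring
  have hmid := hconv.2 (show (4:ℝ) ∈ Set.Ioi (0:ℝ) by norm_num)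
    (show (6:ℝ) ∈ Set.Ioi (0:ℝ) by norm_num)
    (show (0:ℝ) ≤ 1/2 by norm_num) (show (0:ℝ) ≤ 1/2 by norm_num)
    (show (1/2 : ℝ) + 1/2 = 1 by norm_num)
  have h5 : (1/2 : ℝ) • (4:ℝ) + (1/2 : ℝ) • (6:ℝ) = 5 := by norm_num
  rw [h5] at hmid
  have : g 5 ≤ 1/2 * g 4 + 1/2 * g 6 := by simpa [g, smul_eq_mul] using hmid
  rw [h45, h56] at this
  linarith
end
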